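/- arXiv:2302.07423 — 9 statements merged into one kernel-verified Lean document; each statement's English description precedes it below -/
import Mathlib

section
/- Let d ≥ 1 and let w_1, …, w_{d+1} ∈ ℝ^d be affinely independent points such that the origin 0 lies in the interior of conv({w_1, …, w_{d+1}}). For each j ∈ {1, …, d+1} let C_j be the set of all nonnegative linear combinations of the vectors {−w_i : i ≠ j}. Then the cones C_1, …, C_{d+1} cover ℝ^d, i.e., every x ∈ ℝ^d lies in C_j for some j. -/
/-!
Since `0` is interior to the hull, the `wᵢ` positively span the space and satisfy a strictly
positive relation `∑ λᵢ wᵢ = 0`. Writing `-x = ∑ bᵢ wᵢ` and subtracting `t λ` from `b`, where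
`t = min bᵢ / λᵢ` is attained at `j`, gives nonnegative coefficients vanishing at `j`, so `x ∈ C_j`.
-/

open Finset Filter Topology

section

variable {ι E : Type*} [Fintype ι] [AddCommGroup E] [Module ℝ E]

theorem exists_nonneg_sum_smul_eq_of_mem_convexHull {v : ι → E} {y : E}
    (hy : y ∈ convexHull ℝ (Set.range v)) :
    ∃ c : ι → ℝ, (∀ i, 0 ≤ c i) ∧ ∑ i, c i • v i = y := by
  have hcone : convexHull ℝ (Set.range v) ⊆ PointedCone.hull ℝ (Set.range v) :=
    convexHull_min PointedCone.subset_hull (PointedCone.convex _)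
  obtain ⟨c, hc⟩ := (Submodule.mem_span_range_iff_exists_fun _).mp (hcone hy)
  exact ⟨fun i => c i, fun i => (c i).2, hc⟩

variable [TopologicalSpace E] [ContinuousSMul ℝ E]

theorem exists_pos_smul_mem_of_mem_nhds_zero {U : Set E} (hU : U ∈ 𝓝 0) (y : E) :
    ∃ t : ℝ, 0 < t ∧ t • y ∈ U := by
  have : Tendsto (fun t : ℝ => t • y) (𝓝[>] 0) (𝓝 0) :=
    (tendsto_nhdsWithin_of_tendsto_nhds tendsto_id).zero_smul_const y
  exact ((this.eventually hU).and self_mem_nhdsWithin).exists.imp fun t ht => ⟨ht.2, ht.1⟩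

theorem exists_nonneg_sum_smul_eq_of_zero_mem_interior_convexHull {v : ι → E}
    (h0 : 0 ∈ interior (convexHull ℝ (Set.range v))) (y : E) :
    ∃ c : ι → ℝ, (∀ i, 0 ≤ c i) ∧ ∑ i, c i • v i = y := by
  obtain ⟨t, ht, hty⟩ := exists_pos_smul_mem_of_mem_nhds_zero (mem_interior_iff_mem_nhds.mp h0) y
  obtain ⟨c, hc, hcv⟩ := exists_nonneg_sum_smul_eq_of_mem_convexHull hty
  refine ⟨t⁻¹ • c, fun i => mul_nonneg (inv_nonneg.mpr ht.le) (hc i), ?_⟩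
  simp only [Pi.smul_apply, smul_assoc, ← smul_sum, hcv, inv_smul_smul₀ ht.ne']

theorem exists_pos_sum_smul_eq_zero_of_zero_mem_interior_convexHull {v : ι → E}
    (h0 : 0 ∈ interior (convexHull ℝ (Set.range v))) :
    ∃ l : ι → ℝ, (∀ i, 0 < l i) ∧ ∑ i, l i • v i = 0 := by
  obtain ⟨c, hc, hcv⟩ := exists_nonneg_sum_smul_eq_of_zero_mem_interior_convexHull h0 (-∑ i, v i)
  refine ⟨c + 1, fun i => add_pos_of_nonneg_of_pos (hc i) one_pos, ?_⟩
  simp [add_smul, sum_add_distrib, hcv]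

end

theorem exists_nonneg_sum_smul_eq_of_pos_sum_smul_eq_zero {k ι M : Type*} [Field k]
    [LinearOrder k] [IsStrictOrderedRing k] [AddCommGroup M] [Module k M] [Fintype ι] [Nonempty ι]
    {v : ι → M} {l : ι → k} (hl : ∀ i, 0 < l i) (hlv : ∑ i, l i • v i = 0) (b : ι → k) :
    ∃ j, ∃ c : ι → k, (∀ i, 0 ≤ c i) ∧ c j = 0 ∧ ∑ i, c i • v i = ∑ i, b i • v i := by
  obtain ⟨j, -, hj⟩ := exists_min_image univ (fun i => b i / l i) univ_nonempty
  set t := b j / l j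
  refine ⟨j, b - t • l, fun i => ?_, ?_, ?_⟩
  · have := hj i (mem_univ i)
    rw [le_div_iff₀ (hl i)] at this
    simpa using this
  · simp [t, div_mul_cancel₀ _ (hl j).ne']
  · simp [sub_smul, sum_sub_distrib, mul_smul, ← smul_sum, hlv]

theorem stmt2_general {d : ℕ} (w : Fin (d + 1) → EuclideanSpace ℝ (Fin d))
    (h0 : (0 : EuclideanSpace ℝ (Fin d)) ∈ interior (convexHull ℝ (Set.range w))) :
    ∀ x : EuclideanSpace ℝ (Fin d), ∃ j : Fin (d + 1), ∃ c : Fin (d + 1) → ℝ,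
      (∀ i, 0 ≤ c i) ∧ x = ∑ i ∈ Finset.univ.erase j, c i • (-(w i)) := by
  intro x
  obtain ⟨b, -, hb⟩ := exists_nonneg_sum_smul_eq_of_zero_mem_interior_convexHull h0 (-x)
  obtain ⟨l, hl, hlw⟩ := exists_pos_sum_smul_eq_zero_of_zero_mem_interior_convexHull h0
  obtain ⟨j, c, hc, hcj, hcw⟩ := exists_nonneg_sum_smul_eq_of_pos_sum_smul_eq_zero hl hlw b
  refine ⟨j, c, hc, ?_⟩
  rw [sum_erase _ (by simp [hcj])]
  simp [smul_neg, sum_neg_distrib, hcw, hb]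

theorem stmt2 {d : ℕ} (hd : 1 ≤ d) (w : Fin (d + 1) → EuclideanSpace ℝ (Fin d))
    (hindep : AffineIndependent ℝ w)
    (h0 : (0 : EuclideanSpace ℝ (Fin d)) ∈ interior (convexHull ℝ (Set.range w))) :
    ∀ x : EuclideanSpace ℝ (Fin d), ∃ j : Fin (d + 1), ∃ c : Fin (d + 1) → ℝ,
      (∀ i, 0 ≤ c i) ∧ x = ∑ i ∈ Finset.univ.erase j, c i • (-(w i)) :=
  stmt2_general w h0
end

section
/- Let d ≥ 2 and let P ⊂ ℝ^d be a set of n points in general position that is not in convex position, and let p ∈ P be a point with p ∈ conv(P \ {p}). Then there exist d points p_1, …, p_d ∈ P \ {p} and a subset U ⊆ P \ {p_1, …, p_d, p} with |U| ≥ (n−1)/(d+1) such that for every q ∈ U, the point p lies in the interior of the simplex conv({p_1, …, p_d, q}); in particular, {p_1, …, p_d, p, q} is not in convex position for every q ∈ U. -/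
open scoped Classical

/-- A finite set `P ⊆ ℝ^d` is in convex position if no point of `P` lies in the
convex hull of the other points. -/
def InConvexPosition {d : ℕ} (P : Finset (EuclideanSpace ℝ (Fin d))) : Prop :=
  ∀ p ∈ P, p ∉ convexHull ℝ ((P.erase p : Finset (EuclideanSpace ℝ (Fin d))) : Set (EuclideanSpace ℝ (Fin d)))

/-- A finite set `P ⊆ ℝ^d` is in general position if every subset of size at most `d+1`
is affinely independent. -/
def InGeneralPosition {d : ℕ} (P : Finset (EuclideanSpace ℝ (Fin d))) : Prop :=
  ∀ Q ⊆ P, Q.card ≤ d + 1 →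
    AffineIndependent ℝ (fun q : (Q : Set (EuclideanSpace ℝ (Fin d))) => (q : EuclideanSpace ℝ (Fin d)))


/-! Carathéodory writes `p` as a positive convex combination of affinely independent points of
`P \ {p}`, and general position forces there to be exactly `d + 1` of them, so `p` lies in the
interior of a simplex `v₀, …, v_d` with vertices in `P \ {p}`. For any other point `q`, the ratio test
of the simplex method picks a vertex `v_i` such that replacing `v_i` by `q` keeps all barycentric
coordinates of `p` nonnegative; general position again rules out a zero coordinate, so `p` stays in
the interior of the new simplex. Pigeonholing the `n - 1` points `q` over the `d + 1` possible
indices `i` gives the set `U`. -/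

namespace AffineBasis

variable {ι k V : Type*} [Fintype ι] [AddCommGroup V]

theorem exists_min_coord_ratio {P : Type*} [Field k] [LinearOrder k] [IsStrictOrderedRing k]
    [Module k V] [AddTorsor V P] (B : AffineBasis ι k P) (x q : P) :
    ∃ i, 0 < B.coord i q ∧
      ∀ j, 0 < B.coord j q → B.coord i x / B.coord i q ≤ B.coord j x / B.coord j q := by
  obtain ⟨j, hj⟩ : ∃ j, 0 < B.coord j q := by
    by_contra! h
    have := B.sum_coord_apply_eq_one q
    linarith [Finset.sum_nonpos fun k (_ : k ∈ Finset.univ) => h k]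
  obtain ⟨i, hi, hmin⟩ := Finset.exists_min_image {k | 0 < B.coord k q}
    (fun k => B.coord k x / B.coord k q) ⟨j, by simpa using hj⟩
  simp only [Finset.mem_filter, Finset.mem_univ, true_and] at hi hmin
  exact ⟨i, hi, hmin⟩

variable [DecidableEq ι]

theorem coord_eq_of_coe_eq_update [Field k] [Module k V] (B B' : AffineBasis ι k V) {i : ι} {q : V}
    (hB' : ⇑B' = Function.update B i q) (hq : B.coord i q ≠ 0) (x : V) (j : ι) :
    B'.coord j x =
      if j = i then B.coord i x / B.coord i q
      else B.coord j x - B.coord i x / B.coord i q * B.coord j q := by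
  set c := B.coord i x / B.coord i q
  have hci : c * B.coord i q = B.coord i x := div_mul_cancel₀ _ hq
  -- the first summand vanishes at `j = i`, so this is the claimed coordinate vector
  set ω : ι → k := fun j => B.coord j x - c * B.coord j q + if j = i then c else 0
  have hω : ∀ j, ω j = if j = i then c else B.coord j x - c * B.coord j q := by
    intro j
    split_ifs with h
    · subst h; simp [ω, hci]
    · simp [ω, h]
  have hsum : ∑ j, ω j = 1 := by
    simp only [ω, Finset.sum_add_distrib, Finset.sum_sub_distrib, ← Finset.mul_sum,
      sum_coord_apply_eq_one, Finset.sum_ite_eq', Finset.mem_univ, if_true]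
    ring
  have hterm : ∀ j, ω j • B' j =
      (B.coord j x - c * B.coord j q) • B j + if j = i then c • q else 0 := by
    intro j
    by_cases h : j = i
    · subst h; simp [ω, hB', hci]
    · simp [ω, hB', h]
  have hcomb : Finset.univ.affineCombination k B' ω = x := by
    rw [Finset.univ.affineCombination_eq_linear_combination _ _ hsum,
      Finset.sum_congr rfl (fun j _ => hterm j), Finset.sum_add_distrib]
    simp only [sub_smul, mul_smul, Finset.sum_sub_distrib, ← Finset.smul_sum,
      linear_combination_coord_eq_self, Finset.sum_ite_eq', Finset.mem_univ, if_true]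
    abel
  rw [← hω, ← hcomb, B'.coord_apply_combination_of_mem (Finset.mem_univ j) hsum]

theorem coord_nonneg_of_coe_eq_update [Field k] [LinearOrder k] [IsStrictOrderedRing k]
    [Module k V] (B B' : AffineBasis ι k V) {i : ι} {q x : V}
    (hB' : ⇑B' = Function.update B i q) (hx : ∀ j, 0 ≤ B.coord j x) (hqi : 0 < B.coord i q)
    (hmin : ∀ j, 0 < B.coord j q → B.coord i x / B.coord i q ≤ B.coord j x / B.coord j q)
    (j : ι) : 0 ≤ B'.coord j x := by
  rw [B.coord_eq_of_coe_eq_update B' hB' hqi.ne' x j]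
  split_ifs with hji
  · exact div_nonneg (hx i) hqi.le
  · rcases le_or_gt (B.coord j q) 0 with hqj | hqj
    · nlinarith [hx j, div_nonneg (hx i) hqi.le]
    · have := (le_div_iff₀ hqj).1 (hmin j hqj)
      linarith

end AffineBasis

namespace InGeneralPosition

variable {d : ℕ} {P : Finset (EuclideanSpace ℝ (Fin d))} {p : EuclideanSpace ℝ (Fin d)}
  {ι : Type*} [Fintype ι]

theorem affineIndependent (hgen : InGeneralPosition P) {u : ι → EuclideanSpace ℝ (Fin d)}
    (hu : Function.Injective u) (huP : ∀ i, u i ∈ P) (hcard : Fintype.card ι ≤ d + 1) :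
    AffineIndependent ℝ u := by
  have h := hgen (Finset.univ.image u) (by simpa [Finset.image_subset_iff] using huP)
    ((Finset.card_image_of_injective _ hu).trans_le hcard)
  rw [Finset.coe_image, Finset.coe_univ, Set.image_univ] at h
  exact h.of_set_of_injective hu

theorem exists_affineBasis (hgen : InGeneralPosition P) {u : ι → EuclideanSpace ℝ (Fin d)}
    (hu : Function.Injective u) (huP : ∀ i, u i ∈ P) (hcard : Fintype.card ι = d + 1) :
    ∃ B : AffineBasis ι ℝ (EuclideanSpace ℝ (Fin d)), ⇑B = u := by
  have hind := hgen.affineIndependent hu huP hcard.le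
  exact ⟨⟨u, hind, hind.affineSpan_eq_top_iff_card_eq_finrank_add_one.2 (by simpa using hcard)⟩, rfl⟩

theorem notMem_affineSpan (hgen : InGeneralPosition P) (hp : p ∈ P)
    {u : ι → EuclideanSpace ℝ (Fin d)} (huP : ∀ i, u i ∈ P.erase p) (hcard : Fintype.card ι ≤ d) :
    p ∉ affineSpan ℝ (Set.range u) := by
  have hpu : p ∉ Finset.univ.image u := by
    simpa [Finset.mem_image] using fun i => Finset.ne_of_mem_erase (huP i)
  have hQ := hgen (insert p (Finset.univ.image u))
    (Finset.insert_subset hp (Finset.image_subset_iff.2 fun i _ => Finset.mem_of_mem_erase (huP i)))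
    (by rw [Finset.card_insert_of_notMem hpu]; grw [Finset.card_image_le, Finset.card_univ, hcard])
  let v : ι → ((insert p (Finset.univ.image u) : Finset _) : Set (EuclideanSpace ℝ (Fin d))) :=
    fun i => ⟨u i, by simp⟩
  have hrange : Subtype.val '' Set.range v = Set.range u := by
    rw [← Set.range_comp]; rfl
  rw [← hrange]
  refine (hQ.mem_affineSpan_iff ⟨p, by simp⟩ _).not.2 ?_
  rintro ⟨i, hi⟩
  exact Finset.ne_of_mem_erase (huP i) (congrArg Subtype.val hi)

theorem coord_ne_zero (hgen : InGeneralPosition P) (hp : p ∈ P)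
    (B : AffineBasis (Fin (d + 1)) ℝ (EuclideanSpace ℝ (Fin d))) (hB : ∀ k, B k ∈ P.erase p)
    (j : Fin (d + 1)) : B.coord j p ≠ 0 := by
  intro h0
  refine hgen.notMem_affineSpan hp (u := Fin.removeNth j B) (fun t => hB _) (by simp) ?_
  have := affineCombination_mem_affineSpan_image (B.sum_coord_apply_eq_one p) (s' := {j}ᶜ)
    (by simpa using h0) B
  rwa [B.affineCombination_coord_eq_self, ← Fin.range_succAbove, ← Set.range_comp] at this

theorem exists_affineBasis_of_mem_convexHull_erase (hgen : InGeneralPosition P) (hp : p ∈ P)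
    (hpint : p ∈ convexHull ℝ ((P.erase p : Finset (EuclideanSpace ℝ (Fin d))) :
      Set (EuclideanSpace ℝ (Fin d)))) :
    ∃ B : AffineBasis (Fin (d + 1)) ℝ (EuclideanSpace ℝ (Fin d)),
      (∀ k, B k ∈ P.erase p) ∧ ∀ k, 0 < B.coord k p := by
  obtain ⟨ι, _, z, w, hzP, hzind, hwpos, hwsum, hzsum⟩ :=
    eq_pos_convex_span_of_mem_convexHull hpint
  have hzP : ∀ i, z i ∈ P.erase p := fun i => hzP ⟨i, rfl⟩
  have hcomb : Finset.univ.affineCombination ℝ z w = p := by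
    rwa [Finset.univ.affineCombination_eq_linear_combination _ _ hwsum]
  have hcard : Fintype.card ι = d + 1 := by
    refine le_antisymm ?_ ?_
    · grw [hzind.card_le_finrank_succ, Submodule.finrank_le, finrank_euclideanSpace_fin]
    · by_contra! h
      exact hgen.notMem_affineSpan hp hzP (by omega)
        (hcomb ▸ affineCombination_mem_affineSpan hwsum z)
  obtain ⟨B, hB⟩ := hgen.exists_affineBasis hzind.injective
    (fun i => Finset.mem_of_mem_erase (hzP i)) hcard
  refine ⟨B.reindex (Fintype.equivFinOfCardEq hcard), fun k => by simpa [hB] using hzP _, fun k => ?_⟩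
  rw [B.coord_reindex, ← hcomb, ← hB, B.coord_apply_combination_of_mem (Finset.mem_univ _) hwsum]
  exact hwpos _

theorem exists_vertex_exchange (hgen : InGeneralPosition P) (hp : p ∈ P)
    (B : AffineBasis (Fin (d + 1)) ℝ (EuclideanSpace ℝ (Fin d))) (hB : ∀ k, B k ∈ P.erase p)
    (hBp : ∀ k, 0 < B.coord k p) {q : EuclideanSpace ℝ (Fin d)} (hq : q ∈ P.erase p) :
    ∃ i, (∀ k, B k = q → k = i) ∧
      p ∈ interior (convexHull ℝ (insert q (Set.range (Fin.removeNth i B)))) := by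
  obtain ⟨i, hi, hmin⟩ := B.exists_min_coord_ratio p q
  have hvertex : ∀ k, B k = q → k = i := by
    rintro k rfl
    by_contra hne
    simp [B.coord_apply_ne (Ne.symm hne)] at hi
  have hu : ∀ k, Function.update B i q k ∈ P.erase p := by
    intro k
    rcases eq_or_ne k i with rfl | hk
    · simpa using hq
    · simpa [hk] using hB k
  have hinj : Function.Injective (Function.update B i q) := by
    intro a b hab
    by_cases ha : a = i <;> by_cases hb : b = i <;>
      simp only [Function.update_apply, ha, hb, if_true, if_false] at hab
    · exact ha.trans hb.symm
    · exact absurd (hvertex b hab.symm) hb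
    · exact absurd (hvertex a hab) ha
    · exact B.ind.injective hab
  obtain ⟨B', hB'⟩ := hgen.exists_affineBasis hinj (fun k => Finset.mem_of_mem_erase (hu k))
    (Fintype.card_fin _)
  refine ⟨i, hvertex, ?_⟩
  have hrange : insert q (Set.range (Fin.removeNth i B)) = Set.range B' := by
    rw [hB', ← Fin.insertNth_removeNth, Fin.range_insertNth]; rfl
  rw [hrange, B'.interior_convexHull]
  intro k
  exact (B.coord_nonneg_of_coe_eq_update B' hB' (fun k => (hBp k).le) hi hmin k).lt_of_ne'
    (hgen.coord_ne_zero hp B' (fun k => hB' ▸ hu k) k)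

end InGeneralPosition

theorem not_inConvexPosition_insert {d : ℕ} {T : Finset (EuclideanSpace ℝ (Fin d))}
    {p : EuclideanSpace ℝ (Fin d)} (hpT : p ∉ T)
    (hp : p ∈ convexHull ℝ (T : Set (EuclideanSpace ℝ (Fin d)))) :
    ¬ InConvexPosition (insert p T) :=
  fun h => h p (Finset.mem_insert_self p T) (by rwa [Finset.erase_insert hpT])

theorem stmt3_general {d n : ℕ} (P : Finset (EuclideanSpace ℝ (Fin d)))
    (hn : P.card = n) (hgen : InGeneralPosition P)
    (p : EuclideanSpace ℝ (Fin d)) (hp : p ∈ P)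
    (hpint : p ∈ convexHull ℝ ((P.erase p : Finset (EuclideanSpace ℝ (Fin d))) : Set (EuclideanSpace ℝ (Fin d)))) :
    ∃ f : Fin d → EuclideanSpace ℝ (Fin d), Function.Injective f ∧ (∀ i, f i ∈ P.erase p) ∧
      ∃ U : Finset (EuclideanSpace ℝ (Fin d)),
        U ⊆ P \ insert p (Finset.image f Finset.univ) ∧
        ((n : ℝ) - 1) / (d + 1) ≤ (U.card : ℝ) ∧
        ∀ q ∈ U,
          p ∈ interior (convexHull ℝ (insert q (Set.range f))) ∧
          ¬ InConvexPosition (insert q (insert p (Finset.image f Finset.univ))) := by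
  obtain ⟨B, hB, hBp⟩ := hgen.exists_affineBasis_of_mem_convexHull_erase hp hpint
  choose! g hgB hg using fun q (hq : q ∈ P.erase p) => hgen.exists_vertex_exchange hp B hB hBp hq
  have hfibers : (Finset.univ : Finset (Fin (d + 1))).card • (((n : ℝ) - 1) / (d + 1)) ≤
      ((P.erase p).card : ℝ) := by
    rw [Finset.card_univ, Fintype.card_fin, nsmul_eq_mul, Finset.card_erase_of_mem hp, hn,
      Nat.cast_sub (hn ▸ Finset.card_pos.2 ⟨p, hp⟩)]
    field_simp
    simp
  obtain ⟨i, -, hi⟩ := Finset.exists_le_card_fiber_of_nsmul_le_card_of_maps_to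
    (fun q _ => Finset.mem_univ (g q)) Finset.univ_nonempty hfibers
  refine ⟨Fin.removeNth i B, B.ind.injective.comp Fin.succAbove_right_injective,
    fun t => hB _, _, fun q hq => ?_, hi, fun q hq => ?_⟩ <;> rw [Finset.mem_filter] at hq
  · have hqf : ∀ t, Fin.removeNth i B t ≠ q := fun t h =>
      Fin.succAbove_ne i t ((hgB q hq.1 _ h).trans hq.2)
    simpa [hqf, Finset.ne_of_mem_erase hq.1] using Finset.mem_of_mem_erase hq.1
  · have hpint' := hq.2 ▸ hg q hq.1
    refine ⟨hpint', Finset.insert_comm p q _ ▸ not_inConvexPosition_insert ?_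
      (by simpa using interior_subset hpint')⟩
    simp only [Finset.mem_insert, Finset.mem_image, Finset.mem_univ, true_and, not_or, not_exists]
    exact ⟨(Finset.ne_of_mem_erase hq.1).symm, fun t => Finset.ne_of_mem_erase (hB _)⟩

theorem stmt3 {d n : ℕ} (hd : 2 ≤ d) (P : Finset (EuclideanSpace ℝ (Fin d)))
    (hn : P.card = n) (hgen : InGeneralPosition P) (hnoncvx : ¬ InConvexPosition P)
    (p : EuclideanSpace ℝ (Fin d)) (hp : p ∈ P)
    (hpint : p ∈ convexHull ℝ ((P.erase p : Finset (EuclideanSpace ℝ (Fin d))) : Set (EuclideanSpace ℝ (Fin d)))) :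
    ∃ f : Fin d → EuclideanSpace ℝ (Fin d), Function.Injective f ∧ (∀ i, f i ∈ P.erase p) ∧
      ∃ U : Finset (EuclideanSpace ℝ (Fin d)),
        U ⊆ P \ insert p (Finset.image f Finset.univ) ∧
        ((n : ℝ) - 1) / (d + 1) ≤ (U.card : ℝ) ∧
        ∀ q ∈ U,
          p ∈ interior (convexHull ℝ (insert q (Set.range f))) ∧
          ¬ InConvexPosition (insert q (insert p (Finset.image f Finset.univ))) :=
  stmt3_general P hn hgen p hp hpint
end

section
/- Let d ≥ 2, let 0 < ε < 1, and let P ⊂ ℝ^d be a set of n points in general position that is ε-far from convex position. Let k = ⌊εn/(d+1)⌋ and assume k ≥ 1. Then there exist sets W_1, …, W_k ⊆ P and U_1, …, U_k ⊆ P such that: (i) |W_i| = d+1 for all 1 ≤ i ≤ k; (ii) W_i ∩ W_j = ∅ for all 1 ≤ i < j ≤ k; (iii) W_i ∩ U_i = ∅ for all 1 ≤ i ≤ k; (iv) W_i ∪ {q} is not in convex position for every q ∈ U_i and every 1 ≤ i ≤ k; and (v) |U_i| ≥ (1−ε)n/(d+1) for all 1 ≤ i ≤ k. -/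
/-!
Let `X` be the union of the sets `W` chosen so far, so `|X| < εn`. Since `P` is `ε`-far from
convex position, `P \ X` is not in convex position: some `p ∈ P \ X` lies in the convex hull of
other points, and by Carathéodory and general position in the convex hull of a `d`-simplex `t`.
Every point `q` can be exchanged for a suitable vertex `s` of `t` so that `p` still lies in the
simplex obtained, so by pigeonhole one vertex `s` serves for at least `(|P \ X| - 1)/(d + 1)`
points `q`; these form `U`, and `W = {p} ∪ t \ {s}`. Then `W ∪ {q}` is not in convex position for
`q ∈ U`, and `W ∩ U = ∅` because `p` lies in the hull of no `d` other points of `P`.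
-/

open scoped Classical

/-- `P` (of size `n`) is `ε`-far from convex position: there is no `X ⊆ P` with
`|X| ≤ εn` such that `P \ X` is in convex position. -/
def EpsFar {d : ℕ} (P : Finset (EuclideanSpace ℝ (Fin d))) (ε : ℝ) : Prop :=
  ¬ ∃ X ⊆ P, (X.card : ℝ) ≤ ε * P.card ∧ InConvexPosition (P \ X)

open Function

theorem Finset.exists_sum_smul_eq_of_mem_affineSpan {𝕜 E : Type*} [Ring 𝕜] [AddCommGroup E]
    [Module 𝕜 E] {S : Finset E} {q : E} (hq : q ∈ affineSpan 𝕜 (S : Set E)) :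
    ∃ c : E → 𝕜, ∑ x ∈ S, c x = 1 ∧ ∑ x ∈ S, c x • x = q := by
  rw [← Set.image_id (S : Set E)] at hq
  obtain ⟨s, c, hsS, hc, rfl⟩ := eq_affineCombination_of_mem_affineSpan_image hq
  have hsS : s ⊆ S := Finset.coe_subset.1 hsS
  refine ⟨Set.indicator s c, by rwa [Finset.sum_indicator_subset _ hsS], ?_⟩
  rw [Finset.affineCombination_eq_linear_combination _ _ _ hc,
    ← Finset.sum_indicator_subset _ hsS]
  refine Finset.sum_congr rfl fun x _ => ?_
  by_cases hx : x ∈ s <;> simp [hx]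

section ExchangeVertex

variable {𝕜 E : Type*} [Field 𝕜] [LinearOrder 𝕜] [IsStrictOrderedRing 𝕜] [AddCommGroup E]
  [Module 𝕜 E] [DecidableEq E]

theorem exists_mem_convexHull_insert_erase {S : Finset E} {p q : E}
    (hp : p ∈ convexHull 𝕜 (S : Set E)) (hq : q ∈ affineSpan 𝕜 (S : Set E)) :
    ∃ j ∈ S, p ∈ convexHull 𝕜 (↑(insert q (S.erase j)) : Set E) := by
  obtain ⟨w, hw0, hw1, hwp⟩ := Finset.mem_convexHull'.1 hp
  obtain ⟨c, hc1, hcq⟩ := Finset.exists_sum_smul_eq_of_mem_affineSpan hq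
  have hpos : (S.filter (0 < c ·)).Nonempty := by
    rw [Finset.filter_nonempty_iff]
    by_contra! h
    linarith [Finset.sum_nonpos h]
  obtain ⟨j, hj, hmin⟩ := Finset.exists_min_image _ (fun x => w x / c x) hpos
  obtain ⟨hjS, hcj⟩ := Finset.mem_filter.1 hj
  -- `p = t • q + ∑ x, (w x - t * c x) • x`, and `t` is the largest step away from `q` keeping
  -- every coefficient nonnegative; the coefficient of `j` is the one that vanishes.
  set t := w j / c j
  have ht : 0 ≤ t := div_nonneg (hw0 j hjS) hcj.le
  have htj : w j - t * c j = 0 := by simp [t, hcj.ne']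
  have hnn : ∀ x ∈ S, 0 ≤ w x - t * c x := by
    intro x hx
    rcases le_or_gt (c x) 0 with hcx | hcx
    · nlinarith [hw0 x hx]
    · have := hmin x (Finset.mem_filter.2 ⟨hx, hcx⟩)
      rw [le_div_iff₀ hcx] at this
      linarith
  refine ⟨j, hjS, ?_⟩
  let v x := w x - t * c x + if x = j then t else 0
  let z x := if x = j then q else x
  have hvz : ∀ x ∈ S, v x • z x = (w x - t * c x) • x + if x = j then t • q else 0 := by
    intro x _
    by_cases hx : x = j
    · subst hx; simp [v, z, htj]
    · simp [v, z, hx]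
  have hsum : ∑ x ∈ S, v x • z x = p := by
    rw [Finset.sum_congr rfl hvz, Finset.sum_add_distrib, Finset.sum_ite_eq' S j, if_pos hjS]
    simp only [sub_smul, Finset.sum_sub_distrib, mul_smul, ← Finset.smul_sum, hwp, hcq]
    abel
  rw [← hsum]
  refine (convex_convexHull 𝕜 _).sum_mem (fun x hx => ?_) ?_ (fun x hx => subset_convexHull 𝕜 _ ?_)
  · rcases eq_or_ne x j with rfl | hx'
    · simp [v, htj, ht]
    · simp [v, hx', hnn x hx]
  · simp only [v, Finset.sum_add_distrib, Finset.sum_sub_distrib, hw1, ← Finset.mul_sum, hc1,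
      Finset.sum_ite_eq' S j, if_pos hjS]
    ring
  · by_cases hx' : x = j <;> simp [z, hx', hx]

end ExchangeVertex

theorem Fin.pairwise_disjoint_snoc {α : Type*} {m : ℕ} {W : Fin m → Finset α} {V : Finset α}
    (hW : Pairwise (Disjoint on W)) (hV : ∀ i, Disjoint V (W i)) :
    Pairwise (Disjoint on (Fin.snoc W V : Fin (m + 1) → Finset α)) := by
  intro i j hij
  induction i using Fin.lastCases with
  | last =>
    induction j using Fin.lastCases with
    | last => exact absurd rfl hij
    | cast j => simpa [onFun] using hV j
  | cast i =>
    induction j using Fin.lastCases with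
    | last => simpa [onFun] using (hV i).symm
    | cast j => simpa [onFun] using hW (ne_of_apply_ne _ hij)

theorem Finset.exists_pairwise_disjoint_of_forall_exists_disjoint {α β : Type*}
    (good : Finset α → β → Prop) (r k : ℕ)
    (h : ∀ X : Finset α, X.card + r ≤ k * r → ∃ W b, W.card = r ∧ Disjoint W X ∧ good W b) :
    ∃ (W : Fin k → Finset α) (b : Fin k → β),
      (∀ i, (W i).card = r) ∧ Pairwise (Disjoint on W) ∧ ∀ i, good (W i) (b i) := by
  suffices ∀ m ≤ k, ∃ (W : Fin m → Finset α) (b : Fin m → β),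
      (∀ i, (W i).card = r) ∧ Pairwise (Disjoint on W) ∧ ∀ i, good (W i) (b i) from this k le_rfl
  intro m
  induction m with
  | zero =>
    exact fun _ => ⟨Fin.elim0, Fin.elim0, fun i => i.elim0, fun i => i.elim0, fun i => i.elim0⟩
  | succ m ih =>
    intro hm
    obtain ⟨W, b, hcard, hdisj, hgood⟩ := ih (by omega)
    have hX : (univ.biUnion W).card + r ≤ k * r :=
      calc (univ.biUnion W).card + r ≤ ∑ i, (W i).card + r := by gcongr; exact card_biUnion_le
        _ = (m + 1) * r := by simp [hcard, add_mul]
        _ ≤ k * r := by gcongr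
    obtain ⟨V, c, hVcard, hVdisj, hVgood⟩ := h _ hX
    refine ⟨Fin.snoc W V, Fin.snoc b c, ?_, Fin.pairwise_disjoint_snoc hdisj fun i => ?_, ?_⟩
    · simp [Fin.forall_fin_succ', hcard, hVcard]
    · exact hVdisj.mono_right (subset_biUnion_of_mem W (mem_univ i))
    · simp [Fin.forall_fin_succ', hgood, hVgood]

section Geometry

variable {d : ℕ}

local notation "E" => EuclideanSpace ℝ (Fin d)

theorem InGeneralPosition.mono {P P' : Finset E} (h : InGeneralPosition P') (hP : P ⊆ P') :
    InGeneralPosition P :=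
  fun Q hQ => h Q (hQ.trans hP)

theorem InGeneralPosition.notMem_convexHull {P T : Finset E} (hP : InGeneralPosition P)
    (hT : T ⊆ P) (hTd : T.card ≤ d) {p : E} (hp : p ∈ P) (hpT : p ∉ T) :
    p ∉ convexHull ℝ (T : Set E) := by
  have hind := hP (insert p T) (Finset.insert_subset hp hT)
    (by rw [Finset.card_insert_of_notMem hpT]; omega)
  intro h
  have hspan : p ∈ affineSpan ℝ (T : Set E) := convexHull_subset_affineSpan _ h
  refine hind.notMem_affineSpan_sdiff ⟨p, Finset.mem_insert_self p T⟩ Set.univ ?_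
  convert hspan using 2
  ext x
  constructor
  · rintro ⟨⟨y, hy⟩, hne, rfl⟩
    exact (Finset.mem_insert.1 hy).resolve_left fun h => hne.2 (Subtype.ext h)
  · intro hx
    refine ⟨⟨x, Finset.mem_insert_of_mem hx⟩, ⟨trivial, fun h => hpT ?_⟩, rfl⟩
    rwa [← Subtype.mk.inj h]

theorem not_inConvexPosition_insert_s4 {A : Finset E} {p : E} (hp : p ∈ convexHull ℝ (A : Set E))
    (hpA : p ∉ A) : ¬ InConvexPosition (insert p A) :=
  fun h => h p (Finset.mem_insert_self p A) (by rwa [Finset.erase_insert hpA])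

theorem InGeneralPosition.exists_mem_convexHull_of_not_inConvexPosition {P : Finset E}
    (hP : InGeneralPosition P) (hconv : ¬ InConvexPosition P) :
    ∃ p ∈ P, ∃ t ⊆ P.erase p, t.card = d + 1 ∧ affineSpan ℝ (t : Set E) = ⊤ ∧
      p ∈ convexHull ℝ (t : Set E) := by
  simp only [InConvexPosition, not_forall, not_not] at hconv
  obtain ⟨p, hp, hpc⟩ := hconv
  rw [convexHull_eq_union] at hpc
  simp only [Set.mem_iUnion] at hpc
  obtain ⟨t, htp, hind, hpt⟩ := hpc
  have htp : t ⊆ P.erase p := Finset.coe_subset.1 htp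
  have hpt' : p ∉ t := fun h => Finset.notMem_erase p P (htp h)
  have htcard : t.card = d + 1 := by
    have hle : t.card ≤ d + 1 := by
      simpa [finrank_euclideanSpace_fin] using
        hind.card_le_finrank_succ.trans (Nat.add_le_add_right (Submodule.finrank_le _) 1)
    have hgt : ¬ t.card ≤ d := fun h =>
      hP.notMem_convexHull (htp.trans (P.erase_subset p)) h hp hpt' hpt
    omega
  refine ⟨p, hp, t, htp, htcard, ?_, hpt⟩
  have h := hind.affineSpan_eq_top_iff_card_eq_finrank_add_one.2 (by simp [htcard])
  rwa [Subtype.range_coe_subtype] at h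

theorem InGeneralPosition.exists_witnesses_of_not_inConvexPosition {R : Finset E}
    (hR : InGeneralPosition R) (hconv : ¬ InConvexPosition R) :
    ∃ W U : Finset E, W ⊆ R ∧ U ⊆ R ∧ W.card = d + 1 ∧ Disjoint W U ∧
      (∀ q ∈ U, ¬ InConvexPosition (insert q W)) ∧ (R.card : ℝ) - 1 ≤ (d + 1) * U.card := by
  obtain ⟨p, hp, t, htR, htcard, hspan, hpt⟩ :=
    hR.exists_mem_convexHull_of_not_inConvexPosition hconv
  choose! f hft hf using fun q (_ : q ∈ R.erase p) =>
    exists_mem_convexHull_insert_erase (q := q) hpt (by simp [hspan])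
  obtain ⟨s, hs, hU⟩ := Finset.exists_le_card_fiber_of_nsmul_le_card_of_maps_to hft
    (Finset.card_pos.1 (by omega)) (b := ((R.erase p).card : ℝ) / (d + 1))
    (by rw [nsmul_eq_mul, htcard]; push_cast; field_simp; rfl)
  set U := (R.erase p).filter (f · = s)
  have hUp : ∀ q ∈ U, q ≠ p ∧ p ∈ convexHull ℝ (↑(insert q (t.erase s)) : Set E) := by
    intro q hq
    obtain ⟨hqR, rfl⟩ := Finset.mem_filter.1 hq
    exact ⟨Finset.ne_of_mem_erase hqR, hf q hqR⟩
  have hpW : p ∉ t.erase s := fun h => Finset.notMem_erase p R (htR (Finset.mem_of_mem_erase h))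
  have hWR : t.erase s ⊆ R := (Finset.erase_subset s t).trans (htR.trans (R.erase_subset p))
  refine ⟨insert p (t.erase s), U, Finset.insert_subset hp hWR,
    (Finset.filter_subset _ _).trans (R.erase_subset p), ?_, ?_, ?_, ?_⟩
  · rw [Finset.card_insert_of_notMem hpW, Finset.card_erase_of_mem hs, htcard, Nat.add_sub_cancel]
  · refine Finset.disjoint_left.2 fun q hqW hqU => ?_
    obtain ⟨hqp, hpq⟩ := hUp q hqU
    rw [Finset.insert_eq_of_mem ((Finset.mem_insert.1 hqW).resolve_left hqp)] at hpq
    exact hR.notMem_convexHull hWR (by simp [Finset.card_erase_of_mem hs, htcard]) hp hpW hpq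
  · intro q hq
    obtain ⟨hqp, hpq⟩ := hUp q hq
    rw [Finset.insert_comm]
    exact not_inConvexPosition_insert_s4 hpq (by simp [hqp.symm, hpW])
  · rw [div_le_iff₀ (by positivity), Finset.card_erase_of_mem hp,
      Nat.cast_sub (Finset.card_pos.2 ⟨p, hp⟩), Nat.cast_one] at hU
    linarith

theorem EpsFar.exists_witnesses {P X : Finset E} {ε : ℝ} (hfar : EpsFar P ε)
    (hP : InGeneralPosition P) (hX : (X.card : ℝ) + 1 ≤ ε * P.card) :
    ∃ W U : Finset E, W ⊆ P ∧ Disjoint W X ∧ U ⊆ P ∧ W.card = d + 1 ∧ Disjoint W U ∧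
      (∀ q ∈ U, ¬ InConvexPosition (insert q W)) ∧ (1 - ε) * P.card ≤ (d + 1) * U.card := by
  have hPX : ((P ∩ X).card : ℝ) ≤ X.card := by
    exact_mod_cast Finset.card_le_card Finset.inter_subset_right
  have hconv : ¬ InConvexPosition (P \ X) := fun h =>
    hfar ⟨P ∩ X, Finset.inter_subset_left, by linarith, by rwa [Finset.sdiff_inter_self_left]⟩
  obtain ⟨W, U, hW, hU, hWcard, hWU, hwit, hUcard⟩ :=
    (hP.mono Finset.sdiff_subset).exists_witnesses_of_not_inConvexPosition hconv
  have hcard : ((P \ X).card : ℝ) + (P ∩ X).card = P.card := by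
    exact_mod_cast Finset.card_sdiff_add_card_inter P X
  refine ⟨W, U, hW.trans Finset.sdiff_subset,
    Finset.disjoint_of_subset_left hW Finset.sdiff_disjoint, hU.trans Finset.sdiff_subset, hWcard,
    hWU, hwit, by linarith⟩

end Geometry

theorem stmt4_general {d n : ℕ} (ε : ℝ) (hε0 : 0 < ε)
    (P : Finset (EuclideanSpace ℝ (Fin d))) (hn : P.card = n)
    (hgen : InGeneralPosition P) (hfar : EpsFar P ε)
    (k : ℕ) (hk : k = ⌊ε * n / (d + 1)⌋₊) :
    ∃ W U : Fin k → Finset (EuclideanSpace ℝ (Fin d)),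
      (∀ i, W i ⊆ P) ∧ (∀ i, U i ⊆ P) ∧
      (∀ i, (W i).card = d + 1) ∧
      (∀ i j, i ≠ j → Disjoint (W i) (W j)) ∧
      (∀ i, Disjoint (W i) (U i)) ∧
      (∀ i, ∀ q ∈ U i, ¬ InConvexPosition (insert q (W i))) ∧
      (∀ i, (1 - ε) * n / (d + 1) ≤ ((U i).card : ℝ)) := by
  have hkd : (k : ℝ) * (d + 1) ≤ ε * n := by
    rw [← le_div_iff₀ (by positivity), hk]
    exact Nat.floor_le (by positivity)
  obtain ⟨W, U, hWcard, hWdisj, hgood⟩ := Finset.exists_pairwise_disjoint_of_forall_exists_disjoint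
    (fun W U => W ⊆ P ∧ U ⊆ P ∧ Disjoint W U ∧ (∀ q ∈ U, ¬ InConvexPosition (insert q W)) ∧
      (1 - ε) * n / (d + 1) ≤ (U.card : ℝ)) (d + 1) k fun X hX => by
    have hX : (X.card : ℝ) + (d + 1) ≤ k * (d + 1) := by exact_mod_cast hX
    obtain ⟨W, U, hWP, hWX, hUP, hWcard, hWU, hwit, hUcard⟩ :=
      hfar.exists_witnesses (X := X) hgen (by rw [hn]; linarith [(d.cast_nonneg : (0 : ℝ) ≤ d)])
    refine ⟨W, U, hWcard, hWX, hWP, hUP, hWU, hwit, ?_⟩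
    rw [div_le_iff₀ (by positivity), ← hn]
    linarith
  exact ⟨W, U, fun i => (hgood i).1, fun i => (hgood i).2.1, hWcard, @hWdisj,
    fun i => (hgood i).2.2.1, fun i => (hgood i).2.2.2.1, fun i => (hgood i).2.2.2.2⟩

theorem stmt4 {d n : ℕ} (hd : 2 ≤ d) (ε : ℝ) (hε0 : 0 < ε) (hε1 : ε < 1)
    (P : Finset (EuclideanSpace ℝ (Fin d))) (hn : P.card = n)
    (hgen : InGeneralPosition P) (hfar : EpsFar P ε)
    (k : ℕ) (hk : k = ⌊ε * n / (d + 1)⌋₊) (hk1 : 1 ≤ k) :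
    ∃ W U : Fin k → Finset (EuclideanSpace ℝ (Fin d)),
      (∀ i, W i ⊆ P) ∧ (∀ i, U i ⊆ P) ∧
      (∀ i, (W i).card = d + 1) ∧
      (∀ i j, i ≠ j → Disjoint (W i) (W j)) ∧
      (∀ i, Disjoint (W i) (U i)) ∧
      (∀ i, ∀ q ∈ U i, ¬ InConvexPosition (insert q (W i))) ∧
      (∀ i, (1 - ε) * n / (d + 1) ≤ ((U i).card : ℝ)) :=
  stmt4_general ε hε0 P hn hgen hfar k hk
end

section
/- Let Ω be a finite set of size n with n ≥ 2^10, and let W_1, W_2, …, W_k ⊆ Ω be k pairwise disjoint subsets of Ω, each of size ℓ, where k ≥ 10 and 3 ≤ ℓ ≤ n/32. Let s be a positive integer with ℓ + (n−ℓ)/(2k)^{1/ℓ} ≤ s ≤ n. Then the number of s-element subsets S ⊆ Ω such that W_i ⊆ S for at least one i ∈ {1, …, k} is at least (1/4)·C(n,s). Equivalently, a uniformly random s-element subset S ⊆ Ω contains some W_i with probability at least 1/4. -/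
/-!
Let `N = C(n, s)` and let `a = C(n - ℓ, s - ℓ)` be the number of `s`-sets containing a fixed `W_i`,
so `a / N = C(s, ℓ) / C(n, ℓ) = p`. The lower bound on `s` gives `(n)_ℓ ≤ 2k (s)_ℓ`, i.e. `k p ≥ 1/2`.
For disjoint `W_i, W_j` the probability of containing both is `C(s, 2ℓ) / C(n, 2ℓ) ≤ p²`, since
`(s - ℓ - i) / (n - ℓ - i) ≤ (s - i) / (n - i)`. Taking the least `m` with `m p ≥ 1/2`, the Bonferroni
inequality for `m` of the events gives probability at least `m p - C(m, 2) p² ≥ 3/8`.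
-/

open Finset

namespace Finset

theorem sum_card_sub_choose_two_mul_le_card_biUnion {ι β : Type*} [DecidableEq ι] [DecidableEq β]
    (A : ι → Finset β) (t : Finset ι) (c : ℝ)
    (hc : ∀ i ∈ t, ∀ j ∈ t, i ≠ j → ((A i ∩ A j).card : ℝ) ≤ c) :
    ∑ i ∈ t, ((A i).card : ℝ) - t.card.choose 2 * c ≤ (t.biUnion A).card := by
  induction t using Finset.induction_on with
  | empty => simp
  | insert a t ha ih =>
    have ih := ih fun i hi j hj => hc i (mem_insert_of_mem hi) j (mem_insert_of_mem hj)
    have hinter : ((A a ∩ t.biUnion A).card : ℝ) ≤ t.card * c := by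
      rw [inter_biUnion]
      calc _ ≤ ∑ j ∈ t, ((A a ∩ A j).card : ℝ) := by exact_mod_cast card_biUnion_le
        _ ≤ ∑ _j ∈ t, c := sum_le_sum fun j hj =>
            hc a (mem_insert_self a t) j (mem_insert_of_mem hj) (ne_of_mem_of_not_mem hj ha).symm
        _ = t.card * c := by rw [sum_const, nsmul_eq_mul]
    have hunion : ((A a ∪ t.biUnion A).card : ℝ) + (A a ∩ t.biUnion A).card =
        (A a).card + (t.biUnion A).card := by exact_mod_cast card_union_add_card_inter _ _
    rw [sum_insert ha, card_insert_of_notMem ha, biUnion_insert, Nat.choose_succ_succ',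
      Nat.choose_one_right]
    push_cast
    linarith

theorem three_mul_div_eight_le_card_biUnion {ι β : Type*} [DecidableEq ι] [DecidableEq β]
    (A : ι → Finset β) (t : Finset ι) {N a : ℝ}
    (hcard : ∀ i ∈ t, ((A i).card : ℝ) = a)
    (hpair : ∀ i ∈ t, ∀ j ∈ t, i ≠ j → N * (A i ∩ A j).card ≤ a ^ 2)
    (ht : N ≤ 2 * t.card * a) :
    3 * N / 8 ≤ (t.biUnion A).card := by
  rcases le_or_gt N 0 with hN | hN
  · linarith [(t.biUnion A).card.cast_nonneg (α := ℝ)]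
  have ha : 0 < a := by
    by_contra! ha
    nlinarith [t.card.cast_nonneg (α := ℝ)]
  -- `m` is the least number of events whose total mass `m * a` reaches `N / 2`.
  set m := ⌈N / (2 * a)⌉₊
  have hmt : m ≤ t.card := Nat.ceil_le.2 <| by rw [div_le_iff₀ (by positivity)]; linarith
  have hm_lower : N / 2 ≤ m * a := by
    have := Nat.le_ceil (N / (2 * a))
    rw [div_le_iff₀ (by positivity)] at this
    linarith
  have hm_upper : (m - 1) * a < N / 2 := by
    have := Nat.ceil_lt_add_one (div_nonneg hN.le (by positivity : (0 : ℝ) ≤ 2 * a))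
    rw [← sub_lt_iff_lt_add, lt_div_iff₀ (by positivity)] at this
    linarith
  obtain ⟨t', ht't, ht'card⟩ := exists_subset_card_eq hmt
  have hbonferroni := sum_card_sub_choose_two_mul_le_card_biUnion A t' (a ^ 2 / N)
    fun i hi j hj hij => by
      rw [le_div_iff₀ hN, mul_comm]
      exact hpair i (ht't hi) j (ht't hj) hij
  rw [sum_congr rfl fun i hi => hcard i (ht't hi), sum_const, nsmul_eq_mul, ht'card,
    Nat.cast_choose_two] at hbonferroni
  calc 3 * N / 8 ≤ m * a - m * (m - 1) / 2 * (a ^ 2 / N) := by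
        rw [show (m : ℝ) * (m - 1) / 2 * (a ^ 2 / N) = (m * a) * ((m - 1) * a) / (2 * N) by ring,
          le_sub_iff_add_le, ← le_sub_iff_add_le', div_le_iff₀ (by positivity)]
        nlinarith
    _ ≤ (t'.biUnion A).card := hbonferroni
    _ ≤ (t.biUnion A).card := by
        exact_mod_cast card_le_card (biUnion_subset_biUnion_of_subset_left A ht't)

end Finset

namespace Nat

theorem descFactorial_sub_mul_descFactorial_le {s n : ℕ} (j ℓ : ℕ) (hsn : s ≤ n) :
    (s - j).descFactorial ℓ * n.descFactorial ℓ ≤ s.descFactorial ℓ * (n - j).descFactorial ℓ := by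
  induction ℓ with
  | zero => simp
  | succ ℓ ih =>
    have hterm : ∀ a b : ℕ, a ≤ b → (a - j) * b ≤ a * (b - j) := fun a b hab => by
      rw [Nat.sub_mul, Nat.mul_sub, mul_comm j]
      exact Nat.sub_le_sub_left (Nat.mul_le_mul_right j hab) _
    simp only [descFactorial_succ, Nat.sub_right_comm _ j ℓ]
    calc _ = (s - ℓ - j) * (n - ℓ) * ((s - j).descFactorial ℓ * n.descFactorial ℓ) := by ring
      _ ≤ (s - ℓ) * (n - ℓ - j) * (s.descFactorial ℓ * (n - j).descFactorial ℓ) :=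
        Nat.mul_le_mul (hterm _ _ (Nat.sub_le_sub_right hsn ℓ)) ih
      _ = _ := by ring

theorem choose_sub_mul_choose_le {s n : ℕ} (j ℓ : ℕ) (hsn : s ≤ n) :
    (s - j).choose ℓ * n.choose ℓ ≤ s.choose ℓ * (n - j).choose ℓ := by
  have h := descFactorial_sub_mul_descFactorial_le j ℓ hsn
  simp only [descFactorial_eq_factorial_mul_choose] at h
  refine Nat.le_of_mul_le_mul_left ?_ (Nat.mul_pos ℓ.factorial_pos ℓ.factorial_pos)
  calc _ = ℓ.factorial * (s - j).choose ℓ * (ℓ.factorial * n.choose ℓ) := by ring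
    _ ≤ ℓ.factorial * s.choose ℓ * (ℓ.factorial * (n - j).choose ℓ) := h
    _ = _ := by ring

theorem choose_mul_choose_sub_two_mul_le_sq {n s ℓ : ℕ} (hℓs : 2 * ℓ ≤ s) (hsn : s ≤ n) :
    n.choose s * (n - 2 * ℓ).choose (s - 2 * ℓ) ≤ ((n - ℓ).choose (s - ℓ)) ^ 2 := by
  have hfirst : n.choose s * s.choose ℓ = n.choose ℓ * (n - ℓ).choose (s - ℓ) :=
    choose_mul (by omega)
  have hsecond : (n - ℓ).choose (s - ℓ) * (s - ℓ).choose ℓ =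
      (n - ℓ).choose ℓ * (n - 2 * ℓ).choose (s - 2 * ℓ) := by
    rw [choose_mul (by omega), show n - ℓ - ℓ = n - 2 * ℓ by omega,
      show s - ℓ - ℓ = s - 2 * ℓ by omega]
  refine Nat.le_of_mul_le_mul_right (c := s.choose ℓ * (n - ℓ).choose ℓ) ?_
    (Nat.mul_pos (choose_pos (by omega)) (choose_pos (by omega)))
  calc _ = (n - ℓ).choose ℓ * (n - 2 * ℓ).choose (s - 2 * ℓ) * (n.choose s * s.choose ℓ) := by
        ring
    _ = ((n - ℓ).choose (s - ℓ)) ^ 2 * ((s - ℓ).choose ℓ * n.choose ℓ) := by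
      rw [← hsecond, hfirst]; ring
    _ ≤ _ := Nat.mul_le_mul_left _ (choose_sub_mul_choose_le ℓ ℓ hsn)

theorem descFactorial_mul_sub_pow_le {n s ℓ : ℕ} (hℓs : ℓ ≤ s) (hsn : s ≤ n) :
    n.descFactorial ℓ * (s - ℓ) ^ ℓ ≤ (n - ℓ) ^ ℓ * s.descFactorial ℓ := by
  rw [descFactorial_eq_prod_range, descFactorial_eq_prod_range, pow_eq_prod_const,
    pow_eq_prod_const, ← prod_mul_distrib, ← prod_mul_distrib]
  refine prod_le_prod' fun i hi => ?_
  have hiℓ : i < ℓ := mem_range.1 hi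
  zify [hiℓ.le.trans (hℓs.trans hsn), hℓs.trans hsn, hℓs, hiℓ.le.trans hℓs]
  nlinarith [mul_nonneg (sub_nonneg.2 (Int.ofNat_le.2 hiℓ.le)) (sub_nonneg.2 (Int.ofNat_le.2 hsn))]

end Nat

theorem pow_le_mul_pow_of_div_rpow_le {x y K : ℝ} {ℓ : ℕ} (hx : 0 ≤ x) (hK : 0 < K) (hℓ : ℓ ≠ 0)
    (h : x / K ^ ((1 : ℝ) / ℓ) ≤ y) : x ^ ℓ ≤ K * y ^ ℓ := by
  rw [div_le_iff₀ (by positivity)] at h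
  calc x ^ ℓ ≤ (y * K ^ ((1 : ℝ) / ℓ)) ^ ℓ := pow_le_pow_left₀ hx h ℓ
    _ = K * y ^ ℓ := by rw [mul_pow, one_div, Real.rpow_inv_natCast_pow hK.le hℓ, mul_comm]

theorem Nat.choose_le_mul_choose_sub_of_le_add_div_rpow {n s ℓ : ℕ} {K : ℝ} (hK : 0 < K)
    (hℓ : ℓ ≠ 0) (hℓs : ℓ < s) (hsn : s ≤ n)
    (h : (ℓ : ℝ) + ((n : ℝ) - ℓ) / K ^ ((1 : ℝ) / ℓ) ≤ s) :
    (n.choose s : ℝ) ≤ K * (n - ℓ).choose (s - ℓ) := by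
  have hpow : ((n - ℓ : ℕ) : ℝ) ^ ℓ ≤ K * ((s - ℓ : ℕ) : ℝ) ^ ℓ :=
    pow_le_mul_pow_of_div_rpow_le (Nat.cast_nonneg _) hK hℓ <| by
      push_cast [hℓs.le, hℓs.le.trans hsn]; linarith
  have hdesc : (n.descFactorial ℓ : ℝ) * ((s - ℓ : ℕ) : ℝ) ^ ℓ ≤
      ((n - ℓ : ℕ) : ℝ) ^ ℓ * s.descFactorial ℓ := by
    exact_mod_cast descFactorial_mul_sub_pow_le hℓs.le hsn
  have hgap : (0 : ℝ) < ((s - ℓ : ℕ) : ℝ) ^ ℓ := by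
    have : 0 < s - ℓ := Nat.sub_pos_of_lt hℓs
    positivity
  have hdesc_le : (n.descFactorial ℓ : ℝ) ≤ K * s.descFactorial ℓ :=
    le_of_mul_le_mul_right (by nlinarith [(s.descFactorial ℓ).cast_nonneg (α := ℝ)]) hgap
  have hchoose : (n.choose ℓ : ℝ) ≤ K * s.choose ℓ := by
    simp only [descFactorial_eq_factorial_mul_choose, Nat.cast_mul] at hdesc_le
    exact le_of_mul_le_mul_left (by linarith) (by positivity : (0 : ℝ) < ℓ.factorial)
  have hmul : (n.choose s : ℝ) * s.choose ℓ = n.choose ℓ * (n - ℓ).choose (s - ℓ) := by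
    exact_mod_cast choose_mul hℓs.le
  refine le_of_mul_le_mul_right ?_ (by exact_mod_cast choose_pos hℓs.le : (0 : ℝ) < s.choose ℓ)
  nlinarith [((n - ℓ).choose (s - ℓ)).cast_nonneg (α := ℝ)]

theorem Finset.choose_mul_card_filter_subset_inter_filter_subset_le {α : Type*} [DecidableEq α]
    {Ω V V' : Finset α} {ℓ s : ℕ} (hV : V ⊆ Ω) (hV' : V' ⊆ Ω) (hVV' : Disjoint V V')
    (hVcard : V.card = ℓ) (hV'card : V'.card = ℓ) (hs : s ≤ Ω.card) :
    Ω.card.choose s *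
        ((Ω.powersetCard s).filter (V ⊆ ·) ∩ (Ω.powersetCard s).filter (V' ⊆ ·)).card ≤
      ((Ω.card - ℓ).choose (s - ℓ)) ^ 2 := by
  rw [← filter_and]
  simp only [← union_subset_iff]
  have hcard : (V ∪ V').card = 2 * ℓ := by rw [card_union_of_disjoint hVV', hVcard, hV'card]; ring
  by_cases hℓs : 2 * ℓ ≤ s
  · rw [card_filter_powersetCard_subset _ _ _ (union_subset hV hV') (hcard ▸ hℓs), hcard]
    exact Nat.choose_mul_choose_sub_two_mul_le_sq hℓs hs
  · have hempty : (Ω.powersetCard s).filter (V ∪ V' ⊆ ·) = ∅ :=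
      filter_eq_empty_iff.2 fun S hS hVS => hℓs <| by
        simpa only [hcard, (mem_powersetCard.1 hS).2] using card_le_card hVS
    rw [hempty, card_empty, mul_zero]
    exact Nat.zero_le _

open scoped Classical

theorem stmt5_general {α : Type*} (Ω : Finset α) (n k ℓ s : ℕ)
    (hn : Ω.card = n)
    (W : Fin k → Finset α) (hWsub : ∀ i, W i ⊆ Ω)
    (hWdisj : ∀ i j, i ≠ j → Disjoint (W i) (W j))
    (hWcard : ∀ i, (W i).card = ℓ)
    (hk : 10 ≤ k) (hℓ3 : 3 ≤ ℓ) (hℓn : (ℓ : ℝ) ≤ (n : ℝ) / 32)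
    (hslb : (ℓ : ℝ) + ((n : ℝ) - ℓ) / ((2 * k : ℝ) ^ ((1 : ℝ) / ℓ)) ≤ (s : ℝ))
    (hsub : s ≤ n) :
    (1 / 4 : ℝ) * (n.choose s : ℝ) ≤
      (((Ω.powersetCard s).filter (fun S => ∃ i, W i ⊆ S)).card : ℝ) := by
  subst hn
  have hℓs : ℓ < s := by
    have hℓ : (0 : ℝ) < ℓ := by exact_mod_cast (by omega : 0 < ℓ)
    have : 0 < ((Ω.card : ℝ) - ℓ) / (2 * k : ℝ) ^ ((1 : ℝ) / ℓ) :=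
      div_pos (by linarith) (by positivity)
    exact_mod_cast (by linarith : (ℓ : ℝ) < s)
  have hprob := Nat.choose_le_mul_choose_sub_of_le_add_div_rpow
    (by linarith [(show (10 : ℝ) ≤ k by exact_mod_cast hk)]) (by omega) hℓs hsub hslb
  set A : Fin k → Finset (Finset α) := fun i => (Ω.powersetCard s).filter (W i ⊆ ·)
  have hcover : univ.biUnion A ⊆ (Ω.powersetCard s).filter (fun S => ∃ i, W i ⊆ S) := by
    intro S hS
    obtain ⟨i, -, hi⟩ := mem_biUnion.1 hS
    exact mem_filter.2 ⟨(mem_filter.1 hi).1, i, (mem_filter.1 hi).2⟩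
  calc (1 / 4 : ℝ) * Ω.card.choose s ≤ 3 * Ω.card.choose s / 8 := by
        linarith [(Ω.card.choose s).cast_nonneg (α := ℝ)]
    _ ≤ (univ.biUnion A).card :=
      three_mul_div_eight_le_card_biUnion A univ (a := (Ω.card - ℓ).choose (s - ℓ))
        (fun i _ => by
          rw [card_filter_powersetCard_subset _ _ _ (hWsub i) (hWcard i ▸ hℓs.le), hWcard])
        (fun i _ j _ hij => by
          exact_mod_cast choose_mul_card_filter_subset_inter_filter_subset_le (hWsub i) (hWsub j)
            (hWdisj i j hij) (hWcard i) (hWcard j) hsub)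
        (by simpa using hprob)
    _ ≤ _ := by exact_mod_cast card_le_card hcover

theorem stmt5 {α : Type*} (Ω : Finset α) (n k ℓ s : ℕ)
    (hn : Ω.card = n) (hn10 : 2 ^ 10 ≤ n)
    (W : Fin k → Finset α) (hWsub : ∀ i, W i ⊆ Ω)
    (hWdisj : ∀ i j, i ≠ j → Disjoint (W i) (W j))
    (hWcard : ∀ i, (W i).card = ℓ)
    (hk : 10 ≤ k) (hℓ3 : 3 ≤ ℓ) (hℓn : (ℓ : ℝ) ≤ (n : ℝ) / 32)
    (hs0 : 0 < s)
    (hslb : (ℓ : ℝ) + ((n : ℝ) - ℓ) / ((2 * k : ℝ) ^ ((1 : ℝ) / ℓ)) ≤ (s : ℝ))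
    (hsub : s ≤ n) :
    (1 / 4 : ℝ) * (n.choose s : ℝ) ≤
      (((Ω.powersetCard s).filter (fun S => ∃ i, W i ⊆ S)).card : ℝ) :=
  stmt5_general Ω n k ℓ s hn W hWsub hWdisj hWcard hk hℓ3 hℓn hslb hsub
end

section
/- Let n, k, ℓ be integers with n ≥ 2^10, k ≥ 10, 3 ≤ ℓ ≤ n/32, and kℓ ≤ n. Then ℓ + (n−ℓ)/(2k)^{1/ℓ} ≥ 3ℓ log₂ k. -/
/-!
Write `L = log₂ k` and `c = (2k)^{1/ℓ}`; the claim is `(3L - 1) ℓ c ≤ n - ℓ`, and the right-hand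
side is at least `(k - 1) ℓ`, `31 ℓ` and `1024 - ℓ`. For `k ≥ 256` the bound `(k - 1) ℓ` wins even
against the crude estimate `c ≤ (2k)^{1/3}`, since `k = 2^L` is exponential in `L`. For `k < 256` we
have `2k ≤ 2⁹`: if `ℓ ≤ 8` then `ℓ c ≤ 32` and `n ≥ 1024` suffices; if `ℓ ≥ 9` then `c ≤ 2`, and
`31 ℓ` (for `k ≤ 32`) or `(k - 1) ℓ` (for `k ≥ 32`) suffices.
-/

open Real

/-- Bernoulli's inequality for `2 ^ y = 32 ^ (y / 5)`. -/
lemma one_add_mul_le_two_rpow {y : ℝ} (hy : 5 ≤ y) : 1 + 31 / 5 * y ≤ (2 : ℝ) ^ y := by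
  have h := one_add_mul_self_le_rpow_one_add (s := 31) (by norm_num) (p := y / 5) (by linarith)
  rw [show (1 + 31 : ℝ) = 2 ^ (5 : ℝ) by norm_num, ← rpow_mul (by norm_num)] at h
  convert h using 2 <;> ring

lemma rpow_one_div_le_of_le_pow {y b : ℝ} {ℓ : ℕ} (hy : 0 ≤ y) (hb : 0 ≤ b) (hℓ : ℓ ≠ 0)
    (h : y ≤ b ^ ℓ) : y ^ (1 / (ℓ : ℝ)) ≤ b :=
  calc y ^ (1 / (ℓ : ℝ)) ≤ (b ^ ℓ) ^ (1 / (ℓ : ℝ)) := by gcongr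
    _ = b := by rw [one_div, pow_rpow_inv_natCast hb hℓ]

lemma natCast_mul_rpow_one_div_le {y : ℝ} {ℓ : ℕ} (hy0 : 0 ≤ y) (hy : y ≤ 2 ^ 9)
    (hℓ3 : 3 ≤ ℓ) (hℓ8 : ℓ ≤ 8) : ℓ * y ^ (1 / (ℓ : ℝ)) ≤ 32 := by
  have hroot_nonneg : 0 ≤ y ^ (1 / (ℓ : ℝ)) := by positivity
  rcases le_or_gt ℓ 4 with hℓ4 | hℓ5
  · have hroot : y ^ (1 / (ℓ : ℝ)) ≤ 8 := rpow_one_div_le_of_le_pow hy0 (by norm_num) (by omega)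
      (hy.trans (by calc (2 : ℝ) ^ 9 = 8 ^ 3 := by norm_num
                      _ ≤ 8 ^ ℓ := pow_le_pow_right₀ (by norm_num) hℓ3))
    have : (ℓ : ℝ) ≤ 4 := by exact_mod_cast hℓ4
    nlinarith
  · have hroot : y ^ (1 / (ℓ : ℝ)) ≤ 4 := rpow_one_div_le_of_le_pow hy0 (by norm_num) (by omega)
      (hy.trans (by calc (2 : ℝ) ^ 9 ≤ 4 ^ 5 := by norm_num
                      _ ≤ 4 ^ ℓ := pow_le_pow_right₀ (by norm_num) hℓ5))
    have : (ℓ : ℝ) ≤ 8 := by exact_mod_cast hℓ8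
    nlinarith

lemma six_logb_two_le {x : ℝ} (hx : 32 ≤ x) : 6 * logb 2 x ≤ x + 1 := by
  have hx0 : 0 < x := by linarith
  have hL : 5 ≤ logb 2 x := by
    rw [le_logb_iff_rpow_le one_lt_two hx0]; norm_num; linarith
  have h := one_add_mul_le_two_rpow hL
  rw [rpow_logb two_pos (by norm_num) hx0] at h
  linarith

lemma three_logb_two_sub_one_mul_rpow_le {x : ℝ} (hx : 256 ≤ x) :
    (3 * logb 2 x - 1) * (2 * x) ^ (1 / 3 : ℝ) ≤ x - 1 := by
  have hx0 : 0 < x := by linarith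
  set L := logb 2 x
  have hL : 8 ≤ L := by
    rw [le_logb_iff_rpow_le one_lt_two hx0]; norm_num; linarith
  have hxL : (2 : ℝ) ^ L = x := rpow_logb two_pos (by norm_num) hx0
  have hroot : (2 * x) ^ (1 / 3 : ℝ) = 2 ^ ((L + 1) / 3) := by
    rw [← hxL, mul_comm, ← rpow_add_one two_ne_zero, ← rpow_mul zero_le_two]; ring_nf
  -- `x = 2^((2L-1)/3) · (2x)^(1/3)`, and the first factor already exceeds `3L`.
  have hsplit : (2 : ℝ) ^ ((2 * L - 1) / 3) * 2 ^ ((L + 1) / 3) = x := by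
    rw [← rpow_add two_pos, ← hxL]; ring_nf
  have h3L : 3 * L ≤ 2 ^ ((2 * L - 1) / 3) :=
    (one_add_mul_le_two_rpow (by linarith)).trans' (by linarith)
  have hc1 : 1 ≤ (2 : ℝ) ^ ((L + 1) / 3) := one_le_rpow one_le_two (by linarith)
  rw [hroot]
  nlinarith

lemma three_logb_two_sub_one_mul_le_of_le {k n : ℝ} {ℓ : ℕ} (hk : 256 ≤ k) (hℓ3 : 3 ≤ ℓ)
    (hkℓ : k * ℓ ≤ n) : (3 * logb 2 k - 1) * (ℓ * (2 * k) ^ (1 / (ℓ : ℝ))) ≤ n - ℓ := by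
  have hℓ : (3 : ℝ) ≤ ℓ := by exact_mod_cast hℓ3
  have hL : 0 ≤ 3 * logb 2 k - 1 := by
    have : 1 ≤ logb 2 k := by rw [le_logb_iff_rpow_le one_lt_two (by linarith)]; linarith
    linarith
  have hroot : (2 * k) ^ (1 / (ℓ : ℝ)) ≤ (2 * k) ^ (1 / 3 : ℝ) :=
    rpow_le_rpow_of_exponent_le (by linarith) (by gcongr)
  calc (3 * logb 2 k - 1) * (ℓ * (2 * k) ^ (1 / (ℓ : ℝ)))
      ≤ (3 * logb 2 k - 1) * (2 * k) ^ (1 / 3 : ℝ) * ℓ := by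
        rw [mul_comm (ℓ : ℝ), ← mul_assoc]; gcongr
    _ ≤ (k - 1) * ℓ := by gcongr; exact three_logb_two_sub_one_mul_rpow_le hk
    _ = k * ℓ - ℓ := by ring
    _ ≤ n - ℓ := by linarith

lemma three_logb_two_sub_one_mul_le_of_lt {k n : ℝ} {ℓ : ℕ} (hk : 8 ≤ k) (hk256 : k < 256)
    (hℓ3 : 3 ≤ ℓ) (hn : 1024 ≤ n) (hℓn : 32 * ℓ ≤ n) (hkℓ : k * ℓ ≤ n) :
    (3 * logb 2 k - 1) * (ℓ * (2 * k) ^ (1 / (ℓ : ℝ))) ≤ n - ℓ := by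
  have hk0 : 0 < k := by linarith
  have hL3 : 3 ≤ logb 2 k := by rw [le_logb_iff_rpow_le one_lt_two hk0]; norm_num; linarith
  have hL8 : logb 2 k ≤ 8 := by rw [logb_le_iff_le_rpow one_lt_two hk0]; norm_num; linarith
  have h2k : 2 * k ≤ 2 ^ 9 := by linarith
  rcases le_or_gt ℓ 8 with hℓ8 | hℓ9
  · have hℓc := natCast_mul_rpow_one_div_le (by linarith) h2k hℓ3 hℓ8
    have : (ℓ : ℝ) ≤ 8 := by exact_mod_cast hℓ8
    nlinarith
  · have hc : (2 * k) ^ (1 / (ℓ : ℝ)) ≤ 2 := rpow_one_div_le_of_le_pow (by linarith)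
      zero_le_two (by omega) (h2k.trans (pow_le_pow_right₀ one_le_two hℓ9))
    have hℓ0 : (0 : ℝ) ≤ ℓ := Nat.cast_nonneg ℓ
    have hcℓ : ℓ * (2 * k) ^ (1 / (ℓ : ℝ)) ≤ 2 * ℓ := by nlinarith
    rcases le_or_gt k 32 with hk32 | hk32
    · have hL5 : logb 2 k ≤ 5 := by rw [logb_le_iff_le_rpow one_lt_two hk0]; norm_num; linarith
      nlinarith
    · have := six_logb_two_le hk32.le
      nlinarith

theorem stmt6 (n k ℓ : ℕ) (hn : 2 ^ 10 ≤ n) (hk : 10 ≤ k)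
    (hℓ3 : 3 ≤ ℓ) (hℓn : (ℓ : ℝ) ≤ (n : ℝ) / 32) (hkl : k * ℓ ≤ n) :
    3 * (ℓ : ℝ) * Real.logb 2 k ≤
      (ℓ : ℝ) + ((n : ℝ) - ℓ) / ((2 * k : ℝ) ^ ((1 : ℝ) / ℓ)) := by
  have hkℓ : (k : ℝ) * ℓ ≤ n := by exact_mod_cast hkl
  have hc : 0 < (2 * k : ℝ) ^ ((1 : ℝ) / ℓ) := by positivity
  suffices key : (3 * logb 2 k - 1) * (ℓ * (2 * k : ℝ) ^ ((1 : ℝ) / ℓ)) ≤ n - ℓ by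
    rw [← sub_le_iff_le_add', le_div_iff₀ hc]
    linarith
  rcases le_or_gt 256 k with hk256 | hk256
  · exact three_logb_two_sub_one_mul_le_of_le (by exact_mod_cast hk256) hℓ3 hkℓ
  · exact three_logb_two_sub_one_mul_le_of_lt (by exact_mod_cast hk.trans' (by norm_num))
      (by exact_mod_cast hk256) hℓ3 (by exact_mod_cast hn) (by linarith) hkℓ
end

section
/- Let n ≥ 2^10 be a real number. Then for every real x with 3 ≤ x ≤ n/32, one has 3x·(2n/x)^{1/x}·log₂(2n/x) ≤ 31n/32. -/
/-!
Put t = 2n/x, so that x t = 2n ≥ 2048, t ≥ 64, and the claim becomes 6 t^(1/x) log₂ t ≤ (31/32) t.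
The bound log y ≤ y/e - 1 at y = t^d / e gives log t ≤ t^d / (d e); with d = 1/2 - 1/x this yields
t^(1/x) log₂ t ≤ √t / (d e log 2). Since e log 2 > 1.88, it remains to see d √t ≥ 10/3, which holds
both when x = 3 (then t ≥ 2048/3) and when t = 64 (then x ≥ 32), and in between.
-/

open Real

theorem log_le_rpow_div_mul_exp_one {t d : ℝ} (ht : 0 < t) (hd : 0 < d) :
    log t ≤ t ^ d / (d * exp 1) := by
  have h := log_le_sub_one_of_pos (show 0 < t ^ d / exp 1 by positivity)
  rw [log_div (by positivity) (exp_pos 1).ne', log_exp, log_rpow ht] at h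
  rw [mul_comm d, ← div_div, le_div_iff₀ hd]
  linarith

theorem rpow_mul_logb_two_le_sqrt {t e : ℝ} (ht : 0 < t) (he : e < 1 / 2) :
    t ^ e * logb 2 t ≤ √t / ((1 / 2 - e) * (exp 1 * log 2)) := by
  have hlog := log_le_rpow_div_mul_exp_one ht (sub_pos.2 he)
  have hsqrt : t ^ e * t ^ (1 / 2 - e) = √t := by
    rw [← rpow_add ht, add_sub_cancel, sqrt_eq_rpow]
  calc t ^ e * logb 2 t = t ^ e * log t / log 2 := by rw [← log_div_log, mul_div_assoc]
    _ ≤ t ^ e * (t ^ (1 / 2 - e) / ((1 / 2 - e) * exp 1)) / log 2 := by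
        gcongr
    _ = √t / ((1 / 2 - e) * (exp 1 * log 2)) := by
        rw [← hsqrt]; field_simp

theorem ten_div_three_le_mul_sqrt {x t : ℝ} (hx : 3 ≤ x) (ht : 64 ≤ t) (hxt : 2048 ≤ x * t) :
    10 / 3 ≤ (1 / 2 - 1 / x) * √t := by
  have hs8 : 8 ≤ √t := (le_sqrt (by norm_num) (by linarith)).2 (by linarith)
  have hxs : 2048 ≤ x * √t ^ 2 := by rwa [sq_sqrt (by linarith)]
  have key : 20 * x ≤ 3 * (x - 2) * √t := by
    -- for √t ≤ 20 the constraint x t ≥ 2048 does the work, for √t ≥ 20 the constraint x ≥ 3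
    rcases le_total √t 20 with h | h
    · nlinarith [mul_nonneg (mul_nonneg (sub_nonneg.2 hs8) (sub_nonneg.2 h)) (by linarith : (0:ℝ) ≤ √t)]
    · nlinarith
  rw [show (1 / 2 - 1 / x) * √t = (x - 2) * √t / (2 * x) by field_simp,
    le_div_iff₀ (by linarith)]
  linarith

theorem six_mul_rpow_inv_mul_logb_two_le {x t : ℝ} (hx : 3 ≤ x) (ht : 64 ≤ t)
    (hxt : 2048 ≤ x * t) : 6 * t ^ (1 / x) * logb 2 t ≤ 31 / 32 * t := by
  have hdt := ten_div_three_le_mul_sqrt hx ht hxt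
  have hE : 1.88 ≤ exp 1 * log 2 := by nlinarith [exp_one_gt_d9, log_two_gt_d9]
  have hd : 0 < 1 / 2 - 1 / x := by
    have : 1 / x < 1 / 2 := one_div_lt_one_div_of_lt (by norm_num) (by linarith)
    linarith
  have hsqrt : √t * √t = t := mul_self_sqrt (by linarith)
  calc 6 * t ^ (1 / x) * logb 2 t = 6 * (t ^ (1 / x) * logb 2 t) := by ring
    _ ≤ 6 * (√t / ((1 / 2 - 1 / x) * (exp 1 * log 2))) := by
        gcongr
        exact rpow_mul_logb_two_le_sqrt (by linarith) (by linarith)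
    _ ≤ 31 / 32 * t := by
        rw [← mul_div_assoc, div_le_iff₀ (by positivity)]
        calc 6 * √t ≤ 31 / 32 * √t * (10 / 3 * 1.88) := by nlinarith [sqrt_nonneg t]
          _ ≤ 31 / 32 * √t * ((1 / 2 - 1 / x) * √t * (exp 1 * log 2)) := by gcongr
          _ = 31 / 32 * t * ((1 / 2 - 1 / x) * (exp 1 * log 2)) := by
            linear_combination 31 / 32 * ((1 / 2 - 1 / x) * (exp 1 * log 2)) * hsqrt

theorem stmt7 (n : ℝ) (hn : 2 ^ 10 ≤ n) :
    ∀ x : ℝ, 3 ≤ x → x ≤ n / 32 →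
      3 * x * (2 * n / x) ^ ((1 : ℝ) / x) * Real.logb 2 (2 * n / x) ≤ 31 * n / 32 := by
  intro x hx hxn
  have hx0 : 0 < x := by linarith
  have hxt : x * (2 * n / x) = 2 * n := by field_simp
  have key := six_mul_rpow_inv_mul_logb_two_le (t := 2 * n / x) hx
    (by rw [le_div_iff₀ hx0]; linarith) (by rw [hxt]; linarith)
  calc 3 * x * (2 * n / x) ^ ((1 : ℝ) / x) * logb 2 (2 * n / x)
      = x / 2 * (6 * (2 * n / x) ^ (1 / x) * logb 2 (2 * n / x)) := by ring
    _ ≤ x / 2 * (31 / 32 * (2 * n / x)) := by gcongr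
    _ = 31 * n / 32 := by field_simp
end

section
/- Let n, k, ℓ be integers with n ≥ 2^10, k ≥ 10, 3 ≤ ℓ ≤ n/32, and kℓ ≤ n. Let s₀ = ℓ + (n−ℓ)/(2k)^{1/ℓ} and s = ⌈s₀⌉. Then 1/2 ≤ k·((s−ℓ)/(n−ℓ))^ℓ ≤ 1. -/
/-!
Write `c = (2k)^{1/ℓ}`, so that `c^ℓ = 2k` and `s₀ - ℓ = (n - ℓ)/c`. Rounding up moves `s - ℓ` by less
than one, so `x = (s - ℓ)/(n - ℓ)` lies between `1/c` and `(1/c)(1 + t)` with `t = c/(n - ℓ)`, and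
`k x^ℓ` lies between `1/2` and `(1 + t)^ℓ / 2`. Finally `(1 + t)^ℓ ≤ exp (ℓ t) ≤ 2`: since `ℓ ≥ 3`
we have `c³ ≤ 2k`, hence `(ℓ c)³ ≤ 2 ℓ² (k ℓ) ≤ (n/8)³`, so `ℓ t ≤ (n/8)/(31n/32) < log 2`.
-/

open Real

lemma rpow_one_div_natCast_pow_le_self {x : ℝ} (hx : 1 ≤ x) {j m : ℕ} (hjm : j ≤ m) :
    (x ^ ((1 : ℝ) / m)) ^ j ≤ x := by
  rw [← rpow_natCast, ← rpow_mul (by linarith)]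
  conv_rhs => rw [← rpow_one x]
  refine rpow_le_rpow_of_exponent_le hx ?_
  rw [div_mul_eq_mul_div, one_mul]
  exact div_le_one_of_le₀ (by exact_mod_cast hjm) (Nat.cast_nonneg m)

lemma mul_rpow_one_div_le_div_eight {k n : ℝ} {ℓ : ℕ} (hk : 1 ≤ 2 * k) (hℓ : 3 ≤ ℓ)
    (hℓn : (ℓ : ℝ) ≤ n / 32) (hkℓ : k * ℓ ≤ n) :
    ℓ * (2 * k) ^ ((1 : ℝ) / ℓ) ≤ n / 8 := by
  have hℓ0 : (0 : ℝ) ≤ ℓ := Nat.cast_nonneg ℓ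
  have hn : 0 ≤ n := by linarith
  have hcube : (ℓ * (2 * k) ^ ((1 : ℝ) / ℓ)) ^ 3 ≤ (n / 8) ^ 3 :=
    calc (ℓ * (2 * k) ^ ((1 : ℝ) / ℓ)) ^ 3 = (ℓ : ℝ) ^ 3 * ((2 * k) ^ ((1 : ℝ) / ℓ)) ^ 3 := by ring
      _ ≤ (ℓ : ℝ) ^ 3 * (2 * k) := by gcongr; exact rpow_one_div_natCast_pow_le_self hk hℓ
      _ = 2 * (ℓ : ℝ) ^ 2 * (k * ℓ) := by ring
      _ ≤ 2 * (n / 32) ^ 2 * n := by gcongr; nlinarith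
      _ = (n / 8) ^ 3 := by ring
  exact le_of_pow_le_pow_left₀ three_ne_zero (by positivity) hcube

lemma one_add_pow_le_of_mul_le_log {t a : ℝ} {m : ℕ} (ht : -1 ≤ t) (ha : 0 < a)
    (hmt : m * t ≤ log a) : (1 + t) ^ m ≤ a :=
  calc (1 + t) ^ m ≤ exp t ^ m := by gcongr; linarith; linarith [add_one_le_exp t]
    _ = exp (m * t) := (exp_nat_mul t m).symm
    _ ≤ exp (log a) := exp_le_exp.mpr hmt
    _ = a := exp_log ha

lemma pow_div_mem_Icc_of_mem_Icc {c N y : ℝ} (hc : 0 < c) (hN : 0 < N)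
    (hy : y ∈ Set.Icc (N / c) (N / c + 1)) (m : ℕ) :
    (y / N) ^ m ∈ Set.Icc ((c ^ m)⁻¹) ((c ^ m)⁻¹ * (1 + c / N) ^ m) := by
  have hlow : c⁻¹ ≤ y / N := by
    rw [le_div_iff₀ hN, ← div_eq_inv_mul]; exact hy.1
  have hupp : y / N ≤ c⁻¹ * (1 + c / N) := by
    rw [div_le_iff₀ hN]
    convert hy.2 using 1
    field_simp
  rw [← inv_pow, ← mul_pow]
  have hc' : 0 ≤ c⁻¹ := by positivity
  exact ⟨pow_le_pow_left₀ hc' hlow m, pow_le_pow_left₀ (hc'.trans hlow) hupp m⟩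

theorem stmt8_general (n k ℓ : ℕ) (hk : 10 ≤ k)
    (hℓ3 : 3 ≤ ℓ) (hℓn : (ℓ : ℝ) ≤ (n : ℝ) / 32) (hkl : k * ℓ ≤ n)
    (s₀ : ℝ) (hs₀ : s₀ = (ℓ : ℝ) + ((n : ℝ) - ℓ) / ((2 * k : ℝ) ^ ((1 : ℝ) / ℓ)))
    (s : ℤ) (hs : s = ⌈s₀⌉) :
    1 / 2 ≤ (k : ℝ) * (((s : ℝ) - ℓ) / ((n : ℝ) - ℓ)) ^ ℓ ∧
      (k : ℝ) * (((s : ℝ) - ℓ) / ((n : ℝ) - ℓ)) ^ ℓ ≤ 1 := by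
  set c := (2 * k : ℝ) ^ ((1 : ℝ) / ℓ) with hc_def
  have hk1 : (1 : ℝ) ≤ k := by exact_mod_cast (by omega : 1 ≤ k)
  have hℓ : (3 : ℝ) ≤ ℓ := by exact_mod_cast hℓ3
  have hN : 0 < (n : ℝ) - ℓ := by linarith
  have hc : 0 < c := by positivity
  have hcℓ : c ^ ℓ = 2 * k := by
    rw [hc_def, one_div, rpow_inv_natCast_pow (by positivity) (by omega)]
  have hsℓ : (s : ℝ) - ℓ ∈ Set.Icc (((n : ℝ) - ℓ) / c) (((n : ℝ) - ℓ) / c + 1) := by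
    rw [hs, ← sub_eq_iff_eq_add'.mpr hs₀]
    constructor <;> linarith [Int.le_ceil s₀, Int.ceil_lt_add_one s₀]
  have hlog : ℓ * (c / ((n : ℝ) - ℓ)) ≤ log 2 := by
    have hℓc : ℓ * c ≤ n / 8 :=
      mul_rpow_one_div_le_div_eight (by linarith) hℓ3 hℓn (by exact_mod_cast hkl)
    rw [← mul_div_assoc, div_le_iff₀ hN]
    linarith [mul_le_mul_of_nonneg_right log_two_gt_d9.le hN.le]
  have hpow := one_add_pow_le_of_mul_le_log (by linarith [div_nonneg hc.le hN.le]) two_pos hlog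
  obtain ⟨hlow, hupp⟩ := pow_div_mem_Icc_of_mem_Icc hc hN hsℓ ℓ
  rw [hcℓ] at hlow hupp
  have hk2 : (k : ℝ) * (2 * (k : ℝ))⁻¹ = 1 / 2 := by field_simp
  constructor
  · calc 1 / 2 = (k : ℝ) * (2 * (k : ℝ))⁻¹ := hk2.symm
      _ ≤ _ := by gcongr
  · calc _ ≤ (k : ℝ) * ((2 * (k : ℝ))⁻¹ * (1 + c / ((n : ℝ) - ℓ)) ^ ℓ) := by gcongr
      _ ≤ 1 := by rw [← mul_assoc, hk2]; linarith

theorem stmt8 (n k ℓ : ℕ) (hn : 2 ^ 10 ≤ n) (hk : 10 ≤ k)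
    (hℓ3 : 3 ≤ ℓ) (hℓn : (ℓ : ℝ) ≤ (n : ℝ) / 32) (hkl : k * ℓ ≤ n)
    (s₀ : ℝ) (hs₀ : s₀ = (ℓ : ℝ) + ((n : ℝ) - ℓ) / ((2 * k : ℝ) ^ ((1 : ℝ) / ℓ)))
    (s : ℤ) (hs : s = ⌈s₀⌉) :
    1 / 2 ≤ (k : ℝ) * (((s : ℝ) - ℓ) / ((n : ℝ) - ℓ)) ^ ℓ ∧
      (k : ℝ) * (((s : ℝ) - ℓ) / ((n : ℝ) - ℓ)) ^ ℓ ≤ 1 :=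
  stmt8_general n k ℓ hk hℓ3 hℓn hkl s₀ hs₀ s hs
end

section
/- Let n, s, t be natural numbers with s ≥ 1, s + t ≤ n, and 2s ≤ n − t + 1. Then C(n−t, s) ≥ exp(−2st/(n−t+1)) · C(n,s). -/
/-!
Writing `n = m + t`, pass from `C(m + t, s)` down to `C(m, s)` one step at a time:
`C(k, s) = (1 - s/(k+1)) · C(k + 1, s)`, and `1 - x ≥ exp(-2x)` for `0 ≤ x ≤ 1/2`. Each of the
`t` factors `1 - s/(k+1)` with `m ≤ k` is therefore at least `exp(-2s/(m+1))`.
-/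

open Real

lemma exp_neg_two_mul_le_one_sub {x : ℝ} (hx₀ : 0 ≤ x) (hx : x ≤ 1 / 2) :
    exp (-(2 * x)) ≤ 1 - x := by
  have hexp : exp (-(2 * x)) * exp (2 * x) = 1 := by rw [← exp_add, neg_add_cancel, exp_zero]
  -- `exp (2x) ≥ 1 + 2x` and `(1 - x)(1 + 2x) = 1 + x(1 - 2x) ≥ 1`
  nlinarith [add_one_le_exp (2 * x), exp_pos (-(2 * x)),
    mul_nonneg hx₀ (by linarith : 0 ≤ 1 - 2 * x)]

lemma Nat.choose_eq_one_sub_div_mul_choose_succ (k s : ℕ) (hs : s ≤ k + 1) :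
    (k.choose s : ℝ) = (1 - s / (k + 1)) * ((k + 1).choose s : ℝ) := by
  have h := congrArg (Nat.cast : ℕ → ℝ) (Nat.choose_mul_succ_eq k s)
  push_cast [Nat.cast_sub hs] at h
  field_simp
  linarith

lemma exp_mul_choose_succ_le_choose {k s : ℕ} (hs : 2 * s ≤ k + 1) :
    exp (-(2 * s) / (k + 1)) * ((k + 1).choose s : ℝ) ≤ k.choose s := by
  rw [Nat.choose_eq_one_sub_div_mul_choose_succ k s (by omega), neg_div, mul_div_assoc]
  refine mul_le_mul_of_nonneg_right (exp_neg_two_mul_le_one_sub (by positivity) ?_) (by positivity)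
  rw [div_le_iff₀ (by positivity)]
  have : (2 * s : ℝ) ≤ k + 1 := by exact_mod_cast hs
  linarith

lemma exp_mul_choose_add_le_choose {m s : ℕ} (hs : 2 * s ≤ m + 1) (t : ℕ) :
    exp (-(2 * s * t) / (m + 1)) * ((m + t).choose s : ℝ) ≤ m.choose s := by
  induction t with
  | zero => simp
  | succ t ih =>
    have hstep : exp (-(2 * s) / (m + 1)) * ((m + t + 1).choose s : ℝ) ≤ (m + t).choose s := by
      refine le_trans ?_ (exp_mul_choose_succ_le_choose (k := m + t) (by omega))
      refine mul_le_mul_of_nonneg_right (exp_le_exp.2 ?_) (by positivity)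
      rw [neg_div, neg_div, neg_le_neg_iff]
      gcongr
      exact_mod_cast Nat.le_add_right m t
    calc exp (-(2 * s * ↑(t + 1)) / (m + 1)) * ((m + (t + 1)).choose s : ℝ)
        = exp (-(2 * s * t) / (m + 1)) *
            (exp (-(2 * s) / (m + 1)) * ((m + t + 1).choose s : ℝ)) := by
          rw [← mul_assoc, ← exp_add, ← add_assoc]
          push_cast
          ring_nf
      _ ≤ exp (-(2 * s * t) / (m + 1)) * (m + t).choose s := by gcongr
      _ ≤ m.choose s := ih

theorem stmt15_general (n s t : ℕ) (hst : s + t ≤ n) (h2s : 2 * s ≤ n - t + 1) :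
    Real.exp (-(2 * (s : ℝ) * t) / ((n : ℝ) - t + 1)) * (n.choose s : ℝ) ≤
      ((n - t).choose s : ℝ) := by
  obtain ⟨m, rfl⟩ : ∃ m, n = m + t := ⟨n - t, by omega⟩
  rw [Nat.add_sub_cancel] at h2s ⊢
  push_cast
  rw [add_sub_cancel_right]
  exact exp_mul_choose_add_le_choose h2s t

theorem stmt15 (n s t : ℕ) (hs : 1 ≤ s) (hst : s + t ≤ n) (h2s : 2 * s ≤ n - t + 1) :
    Real.exp (-(2 * (s : ℝ) * t) / ((n : ℝ) - t + 1)) * (n.choose s : ℝ) ≤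
      ((n - t).choose s : ℝ) :=
  stmt15_general n s t hst h2s
end

section
/- Let d ≥ 2 and let P ⊂ ℝ^d be a set of n points with n ≥ 1500. Let ε be a real number with 1/n ≤ ε ≤ n^{−0.9}, and suppose P is ε-close to convex position, i.e., there exists X ⊆ P with |X| ≤ εn such that P \ X is in convex position. Set s = ⌈1/(6ε)⌉. Then the number of s-element subsets S ⊆ P that are in convex position is at least (2/3)·C(n,s). Equivalently, a uniformly random s-element subset of P is in convex position with probability at least 2/3. -/
open scoped Classical

/-!
Remove the at most `εn` exceptional points `X`: every `s`-subset of `P \ X` is in convex position.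
A uniformly random `s`-subset of `P` meets `X` with probability at most `|X| s / n ≤ εn s / n`,
which is about `1/6 + ε ≤ 1/3` for `s = ⌈1/(6ε)⌉`.
-/

lemma InConvexPosition.mono {d : ℕ} {S Q : Finset (EuclideanSpace ℝ (Fin d))}
    (hSQ : S ⊆ Q) (hQ : InConvexPosition Q) : InConvexPosition S :=
  fun p hp hmem => hQ p (hSQ hp) <| convexHull_mono
    (by simpa only [Finset.coe_erase] using Set.sdiff_subset_sdiff_left hSQ) hmem

lemma choose_le_card_filter_inConvexPosition {d : ℕ} {Q P : Finset (EuclideanSpace ℝ (Fin d))}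
    (hQP : Q ⊆ P) (hQ : InConvexPosition Q) (s : ℕ) :
    Q.card.choose s ≤ ((P.powersetCard s).filter InConvexPosition).card := by
  rw [← Finset.card_powersetCard]
  exact Finset.card_le_card fun S hS => Finset.mem_filter.mpr
    ⟨Finset.powersetCard_mono hQP hS, hQ.mono (Finset.mem_powersetCard.mp hS).1⟩

/-- Union bound for `(t+1)`-subsets of an `(m+k)`-set meeting a fixed `k`-subset. -/
lemma Nat.choose_add_le_choose_add_mul (t : ℕ) : ∀ k m : ℕ,
    (m + k).choose (t + 1) ≤ m.choose (t + 1) + k * (m + k - 1).choose t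
  | 0, m => by simp
  | k + 1, m => by
    have ih := Nat.choose_add_le_choose_add_mul t k (m + 1)
    have hmono := Nat.choose_le_choose t (Nat.le_add_right m k)
    rw [show m + 1 + k - 1 = m + k by omega, Nat.choose_succ_succ] at ih
    rw [show m + (k + 1) = m + 1 + k by ring, show m + 1 + k - 1 = m + k by omega]
    nlinarith

lemma Nat.mul_choose_le_mul_choose_sub_add {n k : ℕ} (hk : k ≤ n) (s : ℕ) :
    n * n.choose s ≤ n * (n - k).choose s + k * s * n.choose s := by
  obtain _ | t := s
  · simp
  obtain _ | m := n
  · simp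
  have hbound := Nat.choose_add_le_choose_add_mul t k (m + 1 - k)
  have hid := Nat.add_one_mul_choose_eq m t
  rw [Nat.sub_add_cancel hk, Nat.add_sub_cancel] at hbound
  calc (m + 1) * (m + 1).choose (t + 1)
      ≤ (m + 1) * ((m + 1 - k).choose (t + 1) + k * m.choose t) :=
        Nat.mul_le_mul_left _ hbound
    _ = (m + 1) * (m + 1 - k).choose (t + 1) + k * (t + 1) * (m + 1).choose (t + 1) := by
        rw [mul_add, mul_left_comm, hid]; ring

lemma Nat.two_mul_choose_le_three_mul_choose_sub {n k s : ℕ} (h : 3 * k * s ≤ n) :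
    2 * n.choose s ≤ 3 * (n - k).choose s := by
  obtain rfl | hs := Nat.eq_zero_or_pos s
  · simp
  obtain rfl | hn := Nat.eq_zero_or_pos n
  · rw [Nat.zero_sub]; omega
  have hunion := Nat.mul_choose_le_mul_choose_sub_add (show k ≤ n by nlinarith) s
  have hfrac : 3 * (k * s * n.choose s) ≤ n * n.choose s := by
    nlinarith [Nat.mul_le_mul_right (n.choose s) h]
  exact Nat.le_of_mul_le_mul_left (by nlinarith) hn

lemma rpow_neg_nine_tenths_le {x : ℝ} (hx : 36 ≤ x) : x ^ (-(0.9 : ℝ)) ≤ 1 / 6 := by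
  have hsqrt : 6 ≤ √x := Real.le_sqrt_of_sq_le (by linarith)
  have hroot : √x ≤ x ^ (0.9 : ℝ) := by
    rw [Real.sqrt_eq_rpow]
    exact Real.rpow_le_rpow_of_exponent_le (by linarith) (by norm_num)
  rw [Real.rpow_neg (by linarith), one_div]
  exact inv_anti₀ (by norm_num) (hsqrt.trans hroot)

lemma three_mul_mul_ceil_le {ε k x : ℝ} (hε : 0 < ε) (hε6 : ε ≤ 1 / 6) (hk0 : 0 ≤ k)
    (hk : k ≤ ε * x) : 3 * k * ⌈1 / (6 * ε)⌉₊ ≤ x := by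
  have hceil : (⌈1 / (6 * ε)⌉₊ : ℝ) ≤ 1 / (6 * ε) + 1 :=
    (Nat.ceil_lt_add_one (by positivity)).le
  have hx : 0 ≤ x := nonneg_of_mul_nonneg_right (hk0.trans hk) hε
  calc 3 * k * ⌈1 / (6 * ε)⌉₊ ≤ 3 * (ε * x) * (1 / (6 * ε) + 1) := by gcongr
    _ = x / 2 + 3 * ε * x := by field_simp; ring
    _ ≤ x := by nlinarith

theorem stmt17_general {d n : ℕ} (P : Finset (EuclideanSpace ℝ (Fin d)))
    (hn : P.card = n) (hn1500 : 1500 ≤ n)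
    (ε : ℝ) (hεlb : 1 / (n : ℝ) ≤ ε) (hεub : ε ≤ (n : ℝ) ^ (-(0.9 : ℝ)))
    (hclose : ∃ X ⊆ P, (X.card : ℝ) ≤ ε * n ∧ InConvexPosition (P \ X))
    (s : ℕ) (hs : s = ⌈1 / (6 * ε)⌉₊) :
    (2 / 3 : ℝ) * (n.choose s : ℝ) ≤
      (((P.powersetCard s).filter (fun S => InConvexPosition S)).card : ℝ) := by
  obtain ⟨X, hXP, hXcard, hXconv⟩ := hclose
  have hε : 0 < ε := lt_of_lt_of_le (by positivity) hεlb
  have hε6 : ε ≤ 1 / 6 :=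
    hεub.trans (rpow_neg_nine_tenths_le (by exact_mod_cast (by omega : 36 ≤ n)))
  have hks : 3 * X.card * s ≤ n := by
    subst hs
    exact_mod_cast three_mul_mul_ceil_le hε hε6 (Nat.cast_nonneg _) hXcard
  have hcount := choose_le_card_filter_inConvexPosition Finset.sdiff_subset hXconv s
  rw [Finset.card_sdiff_of_subset hXP, hn] at hcount
  have hsplit : (2 : ℝ) * n.choose s ≤ 3 * (n - X.card).choose s := by
    exact_mod_cast Nat.two_mul_choose_le_three_mul_choose_sub hks
  have := Nat.cast_le (α := ℝ).mpr hcount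
  linarith

theorem stmt17 {d n : ℕ} (hd : 2 ≤ d) (P : Finset (EuclideanSpace ℝ (Fin d)))
    (hn : P.card = n) (hn1500 : 1500 ≤ n)
    (ε : ℝ) (hεlb : 1 / (n : ℝ) ≤ ε) (hεub : ε ≤ (n : ℝ) ^ (-(0.9 : ℝ)))
    (hclose : ∃ X ⊆ P, (X.card : ℝ) ≤ ε * n ∧ InConvexPosition (P \ X))
    (s : ℕ) (hs : s = ⌈1 / (6 * ε)⌉₊) :
    (2 / 3 : ℝ) * (n.choose s : ℝ) ≤
      (((P.powersetCard s).filter (fun S => InConvexPosition S)).card : ℝ) :=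
  stmt17_general P hn hn1500 ε hεlb hεub hclose s hs
end
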